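/- arXiv:2308.00984 — 9 statements merged into one kernel-verified Lean document; each statement's English description precedes it below -/
import Mathlib

section
/- Let (Ω,F,P) be a complete probability space and let B ∈ F ⊗ B([0,∞)). Then the map (ω,t) ↦ τ_B(ω,t) from Ω × [0,∞) to [0,∞] is F ⊗ B([0,∞))/B([0,∞])-measurable; in particular, for every fixed t ∈ [0,∞) the map ω ↦ τ_B(ω,t) is F-measurable. -/
open MeasureTheory
open scoped NNReal ENNReal Topology

/-- The reaching time (debut) of a set `B ⊆ Ω × [0,∞)`:
`τ_B(ω,t) = inf {s > t : (ω,s) ∈ B}`, valued in `[0,∞]`, with the convention `inf ∅ = ∞`. -/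
noncomputable def reachingTime {Ω : Type*} (B : Set (Ω × ℝ≥0)) (ω : Ω) (t : ℝ≥0) : ℝ≥0∞ :=
  sInf {x : ℝ≥0∞ | ∃ s : ℝ≥0, x = (s : ℝ≥0∞) ∧ t < s ∧ (ω, s) ∈ B}

/-!
A measurable `B ⊆ Ω × Y` involves only countably many measurable subsets of `Ω`, so it is the
preimage of a Borel set `B' ⊆ (ℕ → Bool) × Y` under `f × id` for a measurable `f : Ω → ℕ → Bool`,
and its projection is `f⁻¹` of the analytic set `π(B')`. An analytic set, a continuous image
`g(ℕ^ℕ)`, is the Suslin operation applied to the closures of the images of cylinders, and the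
Suslin operation preserves null-measurability. On a complete space projections of measurable
sets are therefore measurable, and `{τ_B < a}` is the union, over `q` in a countable dense subset
of `ℝ≥0`, of the rectangles `π(B ∩ Ω × [q, a)) × [0, q)`.
-/

open Set PiNat

/-- `res σ n = [σ (n-1), …, σ 0]`, so the children of a node `l` are the lists `i :: l`. -/
def suslin {X : Type*} (A : List ℕ → Set X) : Set X :=
  ⋃ σ : ℕ → ℕ, ⋂ n, A (res σ n)

theorem mem_suslin {X : Type*} {A : List ℕ → Set X} {x : X} :
    x ∈ suslin A ↔ ∃ σ : ℕ → ℕ, ∀ n, x ∈ A (res σ n) := by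
  simp [suslin]

theorem exists_forall_res_of_forall_cons {α : Type*} [Nonempty α] {p : List α → Prop}
    (hnil : p []) (hcons : ∀ l, p l → ∃ a, p (a :: l)) : ∃ σ : ℕ → α, ∀ n, p (res σ n) := by
  have hstep : ∀ l, ∃ a, p l → p (a :: l) := fun l => by
    by_cases hl : p l
    · obtain ⟨a, ha⟩ := hcons l hl
      exact ⟨a, fun _ => ha⟩
    · exact ⟨Classical.arbitrary α, fun h => absurd h hl⟩
  choose c hc using hstep
  let L : ℕ → List α := fun n => Nat.rec [] (fun _ l => c l :: l) n
  have hres : ∀ n, res (fun n => c (L n)) n = L n := by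
    intro n
    induction n with
    | zero => rfl
    | succ n ih => rw [res_succ, ih]
  refine ⟨fun n => c (L n), fun n => ?_⟩
  rw [hres]
  induction n with
  | zero => exact hnil
  | succ n ih => exact hc _ ih

namespace suslin

variable {X : Type*} (A : List ℕ → Set X)

def fromNode (l : List ℕ) : Set X :=
  {x | ∃ σ : ℕ → ℕ, res σ l.length = l ∧ ∀ n, x ∈ A (res σ n)}

theorem fromNode_nil : fromNode A [] = suslin A := by
  ext x
  simp [fromNode, mem_suslin]

theorem fromNode_subset (l : List ℕ) : fromNode A l ⊆ A l := by
  rintro x ⟨σ, hσ, hx⟩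
  simpa [hσ] using hx l.length

theorem fromNode_eq_iUnion (l : List ℕ) : fromNode A l = ⋃ i, fromNode A (i :: l) := by
  ext x
  simp only [fromNode, mem_iUnion, mem_ofPred_eq, List.length_cons]
  constructor
  · rintro ⟨σ, hσ, hx⟩
    exact ⟨σ l.length, σ, by rw [res_succ, hσ], hx⟩
  · rintro ⟨i, σ, hσ, hx⟩
    rw [res_succ, List.cons.injEq] at hσ
    exact ⟨σ, hσ.2, hx⟩

end suslin

/-- The measurable envelopes `E l` of the pieces `fromNode A l` exceed the union of the envelopes
of the children only by null sets, and a point of `E []` outside all of these null sets lies on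
a branch of the scheme. -/
theorem nullMeasurableSet_suslin {X : Type*} [MeasurableSpace X] {μ : Measure X} [SFinite μ]
    {A : List ℕ → Set X} (hA : ∀ l, MeasurableSet (A l)) : NullMeasurableSet (suslin A) μ := by
  set E : List ℕ → Set X := fun l => toMeasurable μ (suslin.fromNode A l) ∩ A l
  have hE : ∀ l, MeasurableSet (E l) := fun l => (measurableSet_toMeasurable μ _).inter (hA l)
  have hsubE : ∀ l, suslin.fromNode A l ⊆ E l := fun l =>
    subset_inter (subset_toMeasurable μ _) (suslin.fromNode_subset A l)
  have hnull : ∀ l, μ (E l \ ⋃ i, E (i :: l)) = 0 := by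
    intro l
    have hdisj : suslin.fromNode A l ∩ (⋃ i, E (i :: l))ᶜ = ∅ := by
      rw [suslin.fromNode_eq_iUnion, ← disjoint_iff_inter_eq_empty,
        disjoint_compl_right_iff_subset]
      exact iUnion_mono fun i => hsubE _
    refine measure_mono_null (t := toMeasurable μ (suslin.fromNode A l) ∩ (⋃ i, E (i :: l))ᶜ)
      (fun x hx => ⟨hx.1.1, hx.2⟩) ?_
    rw [Measure.measure_toMeasurable_inter_of_sFinite (MeasurableSet.iUnion fun i => hE _).compl,
      hdisj, measure_empty]
  have hcover : E [] \ suslin A ⊆ ⋃ l, (E l \ ⋃ i, E (i :: l)) := by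
    rintro x ⟨hx, hxA⟩
    by_contra! hcons
    simp only [mem_iUnion, mem_sdiff, not_exists, not_and, not_forall_not] at hcons
    obtain ⟨σ, hσ⟩ := exists_forall_res_of_forall_cons (p := fun l => x ∈ E l) hx hcons
    exact hxA (mem_suslin.2 ⟨σ, fun n => (hσ n).2⟩)
  have hsub : suslin A ⊆ E [] := suslin.fromNode_nil A ▸ hsubE []
  rw [← sdiff_sdiff_cancel_left hsub]
  exact (hE []).nullMeasurableSet.diff
    (NullMeasurableSet.of_null (measure_mono_null hcover (measure_iUnion_null hnull)))

theorem PiNat.exists_cylinder_subset {E : ℕ → Type*} [∀ n, TopologicalSpace (E n)]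
    [∀ n, DiscreteTopology (E n)] {x : ∀ n, E n} {U : Set (∀ n, E n)} (hU : U ∈ 𝓝 x) :
    ∃ n, cylinder x n ⊆ U := by
  obtain ⟨_, ⟨y, n, rfl⟩, hx, hU⟩ := (isTopologicalBasis_cylinders E).mem_nhds_iff.1 hU
  exact ⟨n, (mem_cylinder_iff_eq.1 hx).symm ▸ hU⟩

theorem range_eq_suslin_closure_image {Z : Type*} [TopologicalSpace Z] [T2Space Z]
    {f : (ℕ → ℕ) → Z} (hf : Continuous f) :
    range f = suslin fun l => closure (f '' {σ | res σ l.length = l}) := by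
  ext x
  simp only [mem_suslin, res_length]
  constructor
  · rintro ⟨σ, rfl⟩
    exact ⟨σ, fun n => subset_closure ⟨σ, rfl, rfl⟩⟩
  · rintro ⟨σ, hx⟩
    refine ⟨σ, ?_⟩
    by_contra hne
    obtain ⟨V, U, hV, hU, hσV, hxU, hUV⟩ := t2_separation hne
    obtain ⟨n, hn⟩ :=
      PiNat.exists_cylinder_subset (hf.continuousAt.preimage_mem_nhds (hV.mem_nhds hσV))
    obtain ⟨_, hyU, τ, hτ, rfl⟩ := mem_closure_iff.1 (hx n) U hU hxU
    rw [← cylinder_eq_res] at hτ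
    exact hUV.ne_of_mem (hn hτ) hyU rfl

theorem MeasureTheory.AnalyticSet.nullMeasurableSet {Z : Type*} [TopologicalSpace Z] [T2Space Z]
    [MeasurableSpace Z] [OpensMeasurableSpace Z] {μ : Measure Z} [SFinite μ] {s : Set Z}
    (hs : AnalyticSet s) : NullMeasurableSet s μ := by
  rw [AnalyticSet] at hs
  rcases hs with rfl | ⟨f, hf, rfl⟩
  · exact .empty
  rw [range_eq_suslin_closure_image hf]
  exact nullMeasurableSet_suslin fun l => isClosed_closure.measurableSet

/-- The coordinates of `f` are (indicators of) the countably many measurable subsets of `Ω`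
that `B` is built from. -/
theorem MeasurableSet.exists_eq_preimage_prodMap_natBool {Ω Y : Type*} [MeasurableSpace Ω]
    [MeasurableSpace Y] {B : Set (Ω × Y)} (hB : MeasurableSet B) :
    ∃ f : Ω → ℕ → Bool, Measurable f ∧
      ∃ B' : Set ((ℕ → Bool) × Y), MeasurableSet B' ∧ B = Prod.map f id ⁻¹' B' := by
  classical
  rw [← generateFrom_prod] at hB
  induction B, hB using MeasurableSpace.generateFrom_induction with
  | hC _ h =>
    obtain ⟨A, hA, C, hC, rfl⟩ := h
    refine ⟨fun ω _ => if ω ∈ A then true else false,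
      measurable_pi_lambda _ fun _ => Measurable.ite hA measurable_const measurable_const,
      {b | b 0 = true} ×ˢ C,
      (measurableSet_eq_fun (measurable_pi_apply 0) measurable_const).prod hC,
      by ext; simp⟩
  | empty => exact ⟨fun _ _ => true, measurable_const, ∅, .empty, rfl⟩
  | compl _ _ h =>
    obtain ⟨f, hf, B', hB', rfl⟩ := h
    exact ⟨f, hf, B'ᶜ, hB'.compl, rfl⟩
  | iUnion _ _ h =>
    choose f hf B' hB' hB using h
    let proj : ℕ → (ℕ → Bool) → ℕ → Bool := fun n b j => b (Nat.pair n j)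
    have hproj : ∀ n, Measurable (proj n) := fun n =>
      measurable_pi_lambda _ fun _ => measurable_pi_apply _
    refine ⟨fun ω k => f k.unpair.1 ω k.unpair.2,
      measurable_pi_lambda _ fun k => measurable_pi_apply _ |>.comp (hf _),
      ⋃ n, Prod.map (proj n) id ⁻¹' B' n,
      .iUnion fun n => (hproj n).prodMap measurable_id (hB' n), ?_⟩
    simp only [hB, preimage_iUnion]
    refine iUnion_congr fun n => ?_
    ext ⟨ω, y⟩
    simp [proj]

theorem MeasurableSet.nullMeasurableSet_fst_image {Ω Y : Type*} [MeasurableSpace Ω]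
    [MeasurableSpace Y] [StandardBorelSpace Y] {μ : Measure Ω} [SFinite μ] {B : Set (Ω × Y)}
    (hB : MeasurableSet B) : NullMeasurableSet (Prod.fst '' B) μ := by
  obtain ⟨f, hf, B', hB', rfl⟩ := hB.exists_eq_preimage_prodMap_natBool
  have hfst : Prod.fst '' (Prod.map f id ⁻¹' B') = f ⁻¹' (Prod.fst '' B') := by
    ext ω
    simp
  rw [hfst]
  exact (hB'.analyticSet_image measurable_fst).nullMeasurableSet.preimage
    (μb := μ.map f) ⟨hf, .rfl⟩

theorem reachingTime_lt_iff {Ω : Type*} {B : Set (Ω × ℝ≥0)} {ω : Ω} {t : ℝ≥0} {a : ℝ≥0∞} :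
    reachingTime B ω t < a ↔ ∃ s : ℝ≥0, t < s ∧ (ω, s) ∈ B ∧ (s : ℝ≥0∞) < a := by
  simp only [reachingTime, sInf_lt_iff, mem_ofPred_eq]
  constructor
  · rintro ⟨_, ⟨s, rfl, hts, hs⟩, hsa⟩
    exact ⟨s, hts, hs, hsa⟩
  · rintro ⟨s, hts, hs, hsa⟩
    exact ⟨s, ⟨s, rfl, hts, hs⟩, hsa⟩

theorem preimage_reachingTime_Iio {Ω : Type*} (B : Set (Ω × ℝ≥0)) {D : Set ℝ≥0} (hD : Dense D)
    (a : ℝ≥0∞) :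
    (fun p : Ω × ℝ≥0 => reachingTime B p.1 p.2) ⁻¹' Iio a =
      ⋃ q ∈ D, (Prod.fst '' (B ∩ univ ×ˢ {s | q ≤ s ∧ (s : ℝ≥0∞) < a})) ×ˢ Iio q := by
  ext ⟨ω, t⟩
  simp only [mem_preimage, mem_Iio, reachingTime_lt_iff, mem_iUnion, mem_prod, mem_image,
    mem_inter_iff, mem_univ, true_and, Prod.exists, exists_and_right, exists_eq_right]
  constructor
  · rintro ⟨s, hts, hs, hsa⟩
    obtain ⟨q, hq, htq, hqs⟩ := hD.exists_between hts
    exact ⟨q, ⟨hq, s, hs, hqs.le, hsa⟩, htq⟩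
  · rintro ⟨q, ⟨-, s, hs, hqs, hsa⟩, htq⟩
    exact ⟨s, htq.trans_le hqs, hs, hsa⟩

theorem measurable_reachingTime {Ω : Type*} [MeasurableSpace Ω] {μ : Measure Ω} [SFinite μ]
    [μ.IsComplete] {B : Set (Ω × ℝ≥0)} (hB : MeasurableSet B) :
    Measurable fun p : Ω × ℝ≥0 => reachingTime B p.1 p.2 := by
  obtain ⟨D, hDc, hD⟩ := TopologicalSpace.exists_countable_dense ℝ≥0
  refine measurable_of_Iio fun a => ?_
  rw [preimage_reachingTime_Iio B hD]
  refine .biUnion hDc fun q _ => MeasurableSet.prod ?_ measurableSet_Iio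
  have hslab : MeasurableSet {s : ℝ≥0 | q ≤ s ∧ (s : ℝ≥0∞) < a} :=
    measurableSet_Ici.inter (measurable_coe_nnreal_ennreal measurableSet_Iio)
  exact NullMeasurableSet.measurable_of_complete (μ := μ)
    (hB.inter (MeasurableSet.univ.prod hslab)).nullMeasurableSet_fst_image

/-- on a complete probability space, if `B ∈ F ⊗ B([0,∞))`, then
`(ω,t) ↦ τ_B(ω,t)` is `F ⊗ B([0,∞))/B([0,∞])`-measurable; in particular, for each fixed `t`
the map `ω ↦ τ_B(ω,t)` is `F`-measurable. -/
theorem stmt_2 {Ω : Type*} [MeasurableSpace Ω] (P : Measure Ω) [IsProbabilityMeasure P]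
    [P.IsComplete] (B : Set (Ω × ℝ≥0)) (hB : MeasurableSet B) :
    Measurable (fun p : Ω × ℝ≥0 => reachingTime B p.1 p.2) ∧
      ∀ t : ℝ≥0, Measurable fun ω => reachingTime B ω t := by
  have h := measurable_reachingTime (μ := P) hB
  exact ⟨h, fun t => h.comp measurable_prodMk_right⟩
end

section
/- Let f : [0,∞) → ℝ be continuous, let τ := inf{t ≥ 0 : f(t) ≥ 1} (with inf ∅ = ∞), and assume 6 ≤ τ < ∞. Then: f,t ⊭ φ₁ for all t ∈ [0, τ−5); f,t ⊨ φ₁ at t = τ−5; and f,t ⊭ φ₁ for all t ∈ (τ−5, τ−3). In particular, τ−5 is an isolated point of the set {t ≥ 0 : f,t ⊨ φ₁}. -/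
open scoped NNReal ENNReal Topology

/-- `◇_I φ` at time `t`: there is `s ∈ I` with `φ` at `t+s`. -/
def Dia (I : Set ℝ≥0) (φ : ℝ≥0 → Prop) (t : ℝ≥0) : Prop := ∃ s ∈ I, φ (t + s)

/-- `□_I φ` at time `t`: for all `s ∈ I`, `φ` at `t+s`. -/
def Box (I : Set ℝ≥0) (φ : ℝ≥0 → Prop) (t : ℝ≥0) : Prop := ∀ s ∈ I, φ (t + s)

/-- The atomic proposition `p`: `f(t) ≥ 1`. -/
def SatP (f : ℝ≥0 → ℝ) (t : ℝ≥0) : Prop := 1 ≤ f t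

/-- `φ₁ := □_{(1,2)}(◇_{(1,4)}p ∧ ¬◇_{(1,3)}p)`. -/
def Phi1 (f : ℝ≥0 → ℝ) : ℝ≥0 → Prop :=
  Box (Set.Ioo 1 2) fun u => Dia (Set.Ioo 1 4) (SatP f) u ∧ ¬ Dia (Set.Ioo 1 3) (SatP f) u

/-!
The set of `p`-times lies in `[τ, ∞)` and has points arbitrarily close above `τ`. Before
`τ - 5` the box reaches some `u` with `u + 4 < τ`, where `◇_{(1,4)} p` fails. At `τ - 5` each
`u ∈ (τ - 4, τ - 3)` sees a `p`-time in `[τ, u + 4)` but none in `(u + 1, u + 3) ⊆ [0, τ)`.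
For `t ∈ (τ - 5, τ - 3)`, a `p`-time `c ∈ [τ, t + 5)` splits as `c = t + u + s` with
`u ∈ (1, 2)` and `s ∈ (1, 3)`, so `◇_{(1,3)} p` holds at `t + u`.
-/

open Set

section Phi1

variable {f : ℝ≥0 → ℝ} {τ t : ℝ≥0}

theorem not_phi1_of_add_five_lt (hτ : τ ∈ lowerBounds {t | SatP f t}) (ht : t + 5 < τ) :
    ¬ Phi1 f t := by
  have h1 : (1 : ℝ≥0) < min 2 (τ - (t + 4)) :=
    lt_min one_lt_two (lt_tsub_iff_left.2 (by rwa [add_assoc, show (4 : ℝ≥0) + 1 = 5 by norm_num]))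
  obtain ⟨u, hu1, hu⟩ := exists_between h1
  intro hP
  obtain ⟨⟨s, ⟨-, hs4⟩, hsat⟩, -⟩ := hP u ⟨hu1, (lt_min_iff.1 hu).1⟩
  have hlate : t + 4 + u < τ := lt_tsub_iff_left.1 (lt_min_iff.1 hu).2
  have : t + u + s < τ := calc
    t + u + s < t + u + 4 := by gcongr
    _ = t + 4 + u := by ring
    _ < τ := hlate
  exact this.not_ge (hτ hsat)

theorem phi1_of_add_five_eq (hτ : IsGLB {t | SatP f t} τ) (ht : t + 5 = τ) : Phi1 f t := by
  rintro u ⟨hu1, hu2⟩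
  constructor
  · have : τ < t + u + 4 := calc
      τ = t + 1 + 4 := by rw [← ht]; ring
      _ < t + u + 4 := by gcongr
    obtain ⟨c, hc, hτc, hc4⟩ := hτ.exists_between this
    have hc1 : t + u + 1 < c := calc
      t + u + 1 < t + 2 + 1 := by gcongr
      _ < t + 5 := by rw [add_assoc]; gcongr; norm_num
      _ ≤ c := ht ▸ hτc
    have hle : t + u ≤ c := le_self_add.trans hc1.le
    refine ⟨c - (t + u), ⟨lt_tsub_iff_left.2 hc1, (tsub_lt_iff_left hle).2 hc4⟩, ?_⟩
    rwa [add_tsub_cancel_of_le hle]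
  · rintro ⟨s, ⟨-, hs3⟩, hsat⟩
    have : t + u + s < τ := calc
      t + u + s < t + 2 + 3 := by rw [add_assoc, add_assoc]; gcongr
      _ = τ := by rw [← ht]; ring
    exact this.not_ge (hτ.1 hsat)

theorem exists_Ioo_one_two_add_Ioo_one_three_eq {d : ℝ≥0} (h3 : 3 < d) (h5 : d < 5) :
    ∃ u ∈ Ioo (1 : ℝ≥0) 2, ∃ s ∈ Ioo (1 : ℝ≥0) 3, u + s = d := by
  obtain ⟨e, rfl⟩ := exists_add_of_le h3.le
  have he : 0 < e := by simpa using h3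
  have he2 : e / 2 < 1 := by
    rw [div_lt_one two_pos]
    exact lt_of_add_lt_add_left (h5.trans_eq (by norm_num : (5 : ℝ≥0) = 3 + 2))
  refine ⟨1 + e / 2, ⟨?_, ?_⟩, 2 + e / 2, ⟨?_, ?_⟩, ?_⟩
  · exact lt_add_of_pos_right 1 (half_pos he)
  · calc 1 + e / 2 < 1 + 1 := by gcongr
      _ = 2 := one_add_one_eq_two
  · exact one_lt_two.trans_le le_self_add
  · calc 2 + e / 2 < 2 + 1 := by gcongr
      _ = 3 := by norm_num
  · rw [add_add_add_comm, add_halves]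
    norm_num

theorem not_phi1_of_lt_add_five (hτ : IsGLB {t | SatP f t} τ) (h3 : t + 3 < τ) (h5 : τ < t + 5) :
    ¬ Phi1 f t := by
  obtain ⟨c, hc, hτc, hc5⟩ := hτ.exists_between h5
  have htc : t + 3 < c := h3.trans_le hτc
  have hle : t ≤ c := le_self_add.trans htc.le
  obtain ⟨u, hu, s, hs, hus⟩ := exists_Ioo_one_two_add_Ioo_one_three_eq (d := c - t)
    (lt_tsub_iff_left.2 htc) ((tsub_lt_iff_left hle).2 hc5)
  intro hP
  refine (hP u hu).2 ⟨s, hs, ?_⟩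
  rwa [add_assoc, hus, add_tsub_cancel_of_le hle]

end Phi1

theorem stmt_5_general (f : ℝ≥0 → ℝ) (τ : ℝ≥0)
    (hτ : IsGLB {t : ℝ≥0 | 1 ≤ f t} τ) (h6 : 6 ≤ τ) :
    (∀ t, t < τ - 5 → ¬ Phi1 f t) ∧ Phi1 f (τ - 5) ∧
      (∀ t, τ - 5 < t → t < τ - 3 → ¬ Phi1 f t) ∧
      𝓝[{t | Phi1 f t} \ {τ - 5}] (τ - 5) = ⊥ := by
  have h5 : (5 : ℝ≥0) ≤ τ := le_trans (by norm_num) h6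
  have before : ∀ t, t < τ - 5 → ¬ Phi1 f t := fun t ht =>
    not_phi1_of_add_five_lt hτ.1 (lt_tsub_iff_right.1 ht)
  have after : ∀ t, τ - 5 < t → t < τ - 3 → ¬ Phi1 f t := fun t h₁ h₂ =>
    not_phi1_of_lt_add_five hτ (lt_tsub_iff_right.1 h₂) ((tsub_lt_iff_right h5).1 h₁)
  refine ⟨before, phi1_of_add_five_eq hτ (tsub_add_cancel_of_le h5), after, ?_⟩
  rw [← Filter.empty_mem_iff_bot, mem_nhdsWithin]
  refine ⟨Iio (τ - 3), isOpen_Iio, tsub_lt_tsub_left_of_le (le_trans (by norm_num) h5) (by norm_num), ?_⟩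
  rintro t ⟨ht3, hP, ht5⟩
  rcases lt_trichotomy t (τ - 5) with h | h | h
  · exact before t h hP
  · exact ht5 h
  · exact after t h ht3 hP

/-- for continuous `f : [0,∞) → ℝ` with `τ = inf{t : f(t) ≥ 1}` satisfying
`6 ≤ τ < ∞` (the existence of the finite infimum is expressed by `IsGLB`), the formula `φ₁`
fails on `[0,τ−5)`, holds at `τ−5`, fails on `(τ−5,τ−3)`; in particular `τ−5` is an isolated
point of `{t : f,t ⊨ φ₁}`. -/
theorem stmt_5 (f : ℝ≥0 → ℝ) (hf : Continuous f) (τ : ℝ≥0)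
    (hτ : IsGLB {t : ℝ≥0 | 1 ≤ f t} τ) (h6 : 6 ≤ τ) :
    (∀ t, t < τ - 5 → ¬ Phi1 f t) ∧ Phi1 f (τ - 5) ∧
      (∀ t, τ - 5 < t → t < τ - 3 → ¬ Phi1 f t) ∧
      𝓝[{t | Phi1 f t} \ {τ - 5}] (τ - 5) = ⊥ :=
  stmt_5_general f τ hτ h6
end

section
/- Let (Ω,F,P) be a probability space and X : [0,∞) → Ω → ℝ a family of functions. Suppose there is a set N ∈ F with P(N) = 0 such that for every ω ∉ N the path t ↦ X_t(ω) is continuous and X_0(ω) = 0. Define τ(ω) := inf{t ≥ 0 : X_t(ω) ≥ 1} ∈ [0,∞] and assume ω ↦ τ(ω) is F-measurable with P(τ = 8) = 0 and P(τ ∈ (8,9)) > 0. Then: (a) for every n ≥ 2, the set {ω : X(ω),0 ⊨ₙ ψ} is empty, so its probability is 0 for all n ≥ 2; (b) the symmetric difference of {ω : X(ω),0 ⊨ ψ} and {ω : τ(ω) ∈ (8,9)} is contained in a P-null set; consequently the probabilities P({ω : X(ω),0 ⊨ₙ ψ}) = 0 do not converge, as n → ∞, to the probability P(τ ∈ (8,9))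 > 0 of the continuous-semantics event {ω : X(ω),0 ⊨ ψ}. -/
open MeasureTheory Filter
open scoped NNReal ENNReal Topology symmDiff

/-- `φ₂ := (◇_{(1,3)}φ₁) ∧ (¬◇_{(1,2)}φ₁) ∧ (¬◇_{(2,3)}φ₁)`. -/
def Phi2 (f : ℝ≥0 → ℝ) : ℝ≥0 → Prop := fun t =>
  Dia (Set.Ioo 1 3) (Phi1 f) t ∧ ¬ Dia (Set.Ioo 1 2) (Phi1 f) t ∧ ¬ Dia (Set.Ioo 2 3) (Phi1 f) t

/-- `φ₃ := ◇_{(1,2)}φ₂`. -/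
def Phi3 (f : ℝ≥0 → ℝ) : ℝ≥0 → Prop := Dia (Set.Ioo 1 2) (Phi2 f)

/-- `ψ := (¬p) ∧ (¬◇_{(0,8)}p) ∧ φ₃`, continuous semantics. -/
def Psi (f : ℝ≥0 → ℝ) : ℝ≥0 → Prop := fun t =>
  ¬ SatP f t ∧ ¬ Dia (Set.Ioo 0 8) (SatP f) t ∧ Phi3 f t

/-- The grid `ℕ/n = {k/n : k ∈ ℕ}` inside `[0,∞)`. -/
def grid (n : ℕ) : Set ℝ≥0 := {t | ∃ k : ℕ, t = (k : ℝ≥0) / (n : ℝ≥0)}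

/-- Discrete `◇_I φ`. -/
def DiaD (n : ℕ) (I : Set ℝ≥0) (φ : ℝ≥0 → Prop) (t : ℝ≥0) : Prop := ∃ s ∈ I ∩ grid n, φ (t + s)

/-- Discrete `□_I φ`. -/
def BoxD (n : ℕ) (I : Set ℝ≥0) (φ : ℝ≥0 → Prop) (t : ℝ≥0) : Prop := ∀ s ∈ I ∩ grid n, φ (t + s)

/-- Discrete semantics of `φ₁`. -/
def Phi1D (f : ℝ≥0 → ℝ) (n : ℕ) : ℝ≥0 → Prop :=
  BoxD n (Set.Ioo 1 2) fun u =>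
    DiaD n (Set.Ioo 1 4) (SatP f) u ∧ ¬ DiaD n (Set.Ioo 1 3) (SatP f) u

/-- Discrete semantics of `φ₂`. -/
def Phi2D (f : ℝ≥0 → ℝ) (n : ℕ) : ℝ≥0 → Prop := fun t =>
  DiaD n (Set.Ioo 1 3) (Phi1D f n) t ∧ ¬ DiaD n (Set.Ioo 1 2) (Phi1D f n) t ∧
    ¬ DiaD n (Set.Ioo 2 3) (Phi1D f n) t

/-- Discrete semantics of `φ₃`. -/
def Phi3D (f : ℝ≥0 → ℝ) (n : ℕ) : ℝ≥0 → Prop := DiaD n (Set.Ioo 1 2) (Phi2D f n)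

/-- Discrete semantics of `ψ`. -/
def PsiD (f : ℝ≥0 → ℝ) (n : ℕ) : ℝ≥0 → Prop := fun t =>
  ¬ SatP f t ∧ ¬ DiaD n (Set.Ioo 0 8) (SatP f) t ∧ Phi3D f n t

/-- `τ := inf{t ≥ 0 : f(t) ≥ 1} ∈ [0,∞]`, with the convention `inf ∅ = ∞`. -/
noncomputable def tauInf (f : ℝ≥0 → ℝ) : ℝ≥0∞ :=
  sInf {x : ℝ≥0∞ | ∃ t : ℝ≥0, x = (t : ℝ≥0∞) ∧ 1 ≤ f t}

/-!
If a continuous path first reaches `1` at `r ∈ (8, 9)`, then near `r - 5` the formula `φ₁` holds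
only at `r - 5`, so `φ₂` holds at `r - 7 ∈ (1, 2)` and `ψ` at `0`; conversely `ψ` at `0` forces
`8 ≤ τ < 9`. So off the null set where the path is not continuous or `τ = 8`, `ψ` at `0` is the
event `τ ∈ (8, 9)`.

On the grid `ℕ/n` with `n ≥ 2` the first hit `m/n` of the path comes after `8`, and discrete `φ₁`
holds at `w/n` (for `w + 4n ≤ m`) exactly when `m = w + 5n - 1` or `m = w + 5n`: at two consecutive
grid points. As `φ₂` asks for `φ₁` at exactly one point of `(t + 1, t + 3)`, discrete `ψ` never
holds at `0`, and the discrete probabilities are eventually `0`.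
-/

open Set

theorem NNReal.exists_mem_Ioo_add_eq {x y a b : ℝ≥0} (h : y ∈ Ioo (x + a) (x + b)) :
    ∃ u ∈ Ioo a b, x + u = y := by
  obtain ⟨u, rfl⟩ := exists_add_of_le ((le_add_right le_rfl).trans h.1.le)
  exact ⟨u, ⟨lt_of_add_lt_add_left h.1, lt_of_add_lt_add_left h.2⟩, rfl⟩

section FirstHit

variable {f : ℝ≥0 → ℝ}

theorem tauInf_le {t : ℝ≥0} (h : SatP f t) : tauInf f ≤ t :=
  sInf_le ⟨t, rfl, h⟩

theorem le_tauInf {t : ℝ≥0} (h : ∀ s < t, ¬ SatP f s) : (t : ℝ≥0∞) ≤ tauInf f := by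
  refine le_sInf ?_
  rintro x ⟨s, rfl, hs⟩
  exact ENNReal.coe_le_coe.2 (not_lt.1 fun hst => h s hst hs)

theorem tauInf_eq_of_isLeast {r : ℝ≥0} (h : IsLeast {t | SatP f t} r) : tauInf f = r :=
  (tauInf_le h.1).antisymm (le_tauInf fun _ hs hsat => (h.2 hsat).not_gt hs)

theorem isLeast_of_tauInf_eq (hf : Continuous f) {r : ℝ≥0} (h : tauInf f = r) :
    IsLeast {t | SatP f t} r := by
  have hne : {t | SatP f t}.Nonempty := by
    by_contra hempty
    refine ENNReal.coe_ne_top (h.symm.trans (sInf_eq_top.2 ?_))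
    rintro x ⟨t, rfl, ht⟩
    exact (hempty ⟨t, ht⟩).elim
  have hleast := (isClosed_le continuous_const hf).isLeast_csInf hne (OrderBot.bddBelow _)
  rwa [ENNReal.coe_injective (h.symm.trans (tauInf_eq_of_isLeast hleast))]

end FirstHit

section ContinuousSemantics

variable {f : ℝ≥0 → ℝ} {r t w : ℝ≥0}

theorem phi1_of_isLeast (h : IsLeast {t | SatP f t} r) (hw : w + 5 = r) : Phi1 f w := by
  rintro u ⟨hu1, hu2⟩
  obtain ⟨v, hv, huv⟩ :=
    NNReal.exists_mem_Ioo_add_eq (x := w + u) (y := r) (a := 1) (b := 4) ⟨by linarith, by linarith⟩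
  refine ⟨⟨v, hv, huv ▸ h.1⟩, ?_⟩
  rintro ⟨v', ⟨-, hv'⟩, hsat⟩
  have := h.2 hsat
  linarith

theorem not_phi1_of_add_five_lt_s9 (h : r ∈ lowerBounds {t | SatP f t}) (h5 : w + 5 < r) (h6 : r < w + 6) :
    ¬ Phi1 f w := by
  intro hw
  obtain ⟨u, hu, hwu⟩ :=
    NNReal.exists_mem_Ioo_add_eq (x := w + 4) (y := r) (a := 1) (b := 2) ⟨by linarith, by linarith⟩
  obtain ⟨⟨v, ⟨-, hv⟩, hsat⟩, -⟩ := hw u hu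
  have := h hsat
  linarith

theorem not_phi1_of_lt_add_five_s9 (h : SatP f r) (h4 : w + 4 < r) (h5 : r < w + 5) : ¬ Phi1 f w := by
  intro hw
  obtain ⟨y, hry, hy⟩ := exists_between h5
  obtain ⟨u, hu, hwu⟩ :=
    NNReal.exists_mem_Ioo_add_eq (x := w + 3) (y := y) (a := 1) (b := 2) ⟨by linarith, by linarith⟩
  obtain ⟨v, hv, huv⟩ :=
    NNReal.exists_mem_Ioo_add_eq (x := w + u) (y := r) (a := 1) (b := 3) ⟨by linarith, by linarith⟩
  exact (hw u hu).2 ⟨v, hv, huv ▸ h⟩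

theorem tauInf_lt_of_phi1 {u : ℝ≥0} (hw : Phi1 f w) (hu : u ∈ Ioo 1 2) :
    tauInf f < ↑(w + u + 4) := by
  obtain ⟨⟨v, ⟨-, hv⟩, hsat⟩, -⟩ := hw u hu
  exact (tauInf_le hsat).trans_lt (ENNReal.coe_lt_coe.2 (add_lt_add_right hv _))

theorem phi1_add_two_of_phi2 (h : Phi2 f t) : Phi1 f (t + 2) := by
  obtain ⟨⟨s, ⟨hs1, hs3⟩, hs⟩, h12, h23⟩ := h
  obtain rfl : s = 2 := by
    by_contra hne
    rcases lt_or_gt_of_ne hne with h2 | h2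
    exacts [h12 ⟨s, ⟨hs1, h2⟩, hs⟩, h23 ⟨s, ⟨h2, hs3⟩, hs⟩]
  exact hs

theorem tauInf_mem_Ioo_of_psi (h : Psi f 0) (h8 : tauInf f ≠ 8) : tauInf f ∈ Ioo 8 9 := by
  obtain ⟨h0, h08, t, ⟨ht1, ht2⟩, ht⟩ := h
  rw [zero_add] at ht
  have hge : ((8 : ℝ≥0) : ℝ≥0∞) ≤ tauInf f := by
    refine le_tauInf fun s hs hsat => ?_
    rcases eq_zero_or_pos s with rfl | hpos
    · exact h0 hsat
    · exact h08 ⟨s, ⟨hpos, hs⟩, by rwa [zero_add]⟩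
  obtain ⟨u, hu, htu⟩ :=
    NNReal.exists_mem_Ioo_add_eq (x := t) (y := 3) (a := 1) (b := 2) ⟨by linarith, by linarith⟩
  refine ⟨lt_of_le_of_ne (by exact_mod_cast hge) (Ne.symm h8),
    (tauInf_lt_of_phi1 (phi1_add_two_of_phi2 ht) hu).trans_le ?_⟩
  exact_mod_cast (by linarith : t + 2 + u + 4 ≤ 9)

theorem psi_of_isLeast (h : IsLeast {t | SatP f t} r) (hr : r ∈ Ioo 8 9) : Psi f 0 := by
  obtain ⟨t, ⟨ht1, ht2⟩, rfl⟩ :=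
    NNReal.exists_mem_Ioo_add_eq (x := 7) (y := r) (a := 1) (b := 2)
      ⟨by linarith [hr.1], by linarith [hr.2]⟩
  have hbelow : ∀ s < 7 + t, ¬ SatP f s := fun s hs hsat => (h.2 hsat).not_gt hs
  refine ⟨hbelow 0 (by positivity), fun ⟨s, ⟨_, hs⟩, hsat⟩ => hbelow _ (by linarith) hsat,
    t, ⟨ht1, ht2⟩, ?_⟩
  rw [zero_add]
  refine ⟨⟨2, ⟨by norm_num, by norm_num⟩, phi1_of_isLeast h (by ring)⟩, ?_, ?_⟩
  · rintro ⟨s, ⟨hs1, hs2⟩, hs⟩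
    exact not_phi1_of_add_five_lt_s9 h.2 (by linarith) (by linarith) hs
  · rintro ⟨s, ⟨hs2, hs3⟩, hs⟩
    exact not_phi1_of_lt_add_five_s9 h.1 (by linarith) (by linarith) hs

theorem psi_zero_iff (hf : Continuous f) (h8 : tauInf f ≠ 8) :
    Psi f 0 ↔ tauInf f ∈ Ioo 8 9 := by
  refine ⟨fun h => tauInf_mem_Ioo_of_psi h h8, fun h => ?_⟩
  lift tauInf f to ℝ≥0 using ne_top_of_lt h.2 with r hr
  exact psi_of_isLeast (isLeast_of_tauInf_eq hf hr.symm)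
    ⟨by exact_mod_cast h.1, by exact_mod_cast h.2⟩

end ContinuousSemantics

section GridSemantics

variable {n : ℕ}

-- The endpoints enter through `ha`, `hb` so that these lemmas rewrite numeral intervals `Ioo 1 3`.
theorem mem_Ioo_inter_grid_iff (hn : 0 < n) {a b : ℝ≥0} {p q : ℕ} (ha : (p : ℝ≥0) = a)
    (hb : (q : ℝ≥0) = b) {s : ℝ≥0} :
    s ∈ Ioo a b ∩ grid n ↔ ∃ c : ℕ, p * n < c ∧ c < q * n ∧ s = c / n := by
  subst ha hb
  have hn' : (0 : ℝ≥0) < n := by exact_mod_cast hn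
  constructor
  · rintro ⟨⟨h1, h2⟩, c, rfl⟩
    exact ⟨c, by exact_mod_cast (lt_div_iff₀ hn').1 h1, by exact_mod_cast (div_lt_iff₀ hn').1 h2,
      rfl⟩
  · rintro ⟨c, h1, h2, rfl⟩
    exact ⟨⟨(lt_div_iff₀ hn').2 (by exact_mod_cast h1), (div_lt_iff₀ hn').2 (by exact_mod_cast h2)⟩,
      c, rfl⟩

theorem diaD_natCast_div_iff (hn : 0 < n) {a b : ℝ≥0} {p q : ℕ} (ha : (p : ℝ≥0) = a)
    (hb : (q : ℝ≥0) = b) (φ : ℝ≥0 → Prop) (m : ℕ) :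
    DiaD n (Ioo a b) φ (m / n) ↔ ∃ c : ℕ, p * n < c ∧ c < q * n ∧ φ ((m + c : ℕ) / n) := by
  simp only [DiaD, mem_Ioo_inter_grid_iff hn ha hb]
  constructor
  · rintro ⟨s, ⟨c, h1, h2, rfl⟩, hφ⟩
    exact ⟨c, h1, h2, by rwa [Nat.cast_add, add_div]⟩
  · rintro ⟨c, h1, h2, hφ⟩
    exact ⟨c / n, ⟨c, h1, h2, rfl⟩, by rwa [Nat.cast_add, add_div] at hφ⟩

theorem boxD_natCast_div_iff (hn : 0 < n) {a b : ℝ≥0} {p q : ℕ} (ha : (p : ℝ≥0) = a)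
    (hb : (q : ℝ≥0) = b) (φ : ℝ≥0 → Prop) (m : ℕ) :
    BoxD n (Ioo a b) φ (m / n) ↔ ∀ c : ℕ, p * n < c → c < q * n → φ ((m + c : ℕ) / n) := by
  simp only [BoxD, mem_Ioo_inter_grid_iff hn ha hb]
  constructor
  · intro h c h1 h2
    simpa only [Nat.cast_add, add_div] using h _ ⟨c, h1, h2, rfl⟩
  · rintro h s ⟨c, h1, h2, rfl⟩
    simpa only [Nat.cast_add, add_div] using h c h1 h2

/-- `φ₁` on the grid `ℕ/n`, the time `k / n` being represented by its numerator `k`. -/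
def GridPhi1 (n : ℕ) (g : ℕ → Prop) (m : ℕ) : Prop :=
  ∀ b, n < b → b < 2 * n →
    (∃ c, n < c ∧ c < 4 * n ∧ g (m + b + c)) ∧ ¬ ∃ c, n < c ∧ c < 3 * n ∧ g (m + b + c)

theorem phi1D_natCast_div_iff (hn : 0 < n) (f : ℝ≥0 → ℝ) (m : ℕ) :
    Phi1D f n (m / n) ↔ GridPhi1 n (fun k => SatP f (k / n)) m := by
  simp only [Phi1D, GridPhi1, boxD_natCast_div_iff hn Nat.cast_one Nat.cast_ofNat,
    diaD_natCast_div_iff hn Nat.cast_one Nat.cast_ofNat, one_mul]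

theorem gridPhi1_iff_of_isLeast {m w : ℕ} {g : ℕ → Prop} (hn : 2 ≤ n) (hm : IsLeast {k | g k} m)
    (hw : w + 4 * n ≤ m) : GridPhi1 n g w ↔ m + 1 = w + 5 * n ∨ m = w + 5 * n := by
  have hgm : g m := hm.1
  constructor
  · intro h
    obtain ⟨⟨c, -, hc, hgc⟩, -⟩ := h (n + 1) (by omega) (by omega)
    have hle := hm.2 hgc
    by_contra hne
    refine (h (m + 1 - w - 3 * n) (by omega) (by omega)).2 ⟨3 * n - 1, by omega, by omega, ?_⟩
    rwa [show w + (m + 1 - w - 3 * n) + (3 * n - 1) = m by omega]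
  · intro hm5 b hb1 hb2
    refine ⟨⟨m - w - b, by omega, by omega, by rwa [show w + b + (m - w - b) = m by omega]⟩, ?_⟩
    rintro ⟨c, -, hc, hgc⟩
    have := hm.2 hgc
    omega

theorem not_satP_natCast_div_of_not_diaD {f : ℝ≥0 → ℝ} (hn : 0 < n) {b : ℝ≥0} {q : ℕ}
    (hb : (q : ℝ≥0) = b) (h0 : ¬ SatP f 0) (h : ¬ DiaD n (Ioo 0 b) (SatP f) 0) :
    ∀ k < q * n, ¬ SatP f (k / n) := by
  rintro k hk hsat
  rcases Nat.eq_zero_or_pos k with rfl | hpos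
  · exact h0 (by simpa only [Nat.cast_zero, zero_div] using hsat)
  · refine h ?_
    simpa only [Nat.cast_zero, zero_div] using
      (diaD_natCast_div_iff hn Nat.cast_zero hb (SatP f) 0).2 ⟨k, by omega, hk, by rwa [zero_add]⟩

theorem not_psiD_zero (f : ℝ≥0 → ℝ) (hn : 2 ≤ n) : ¬ PsiD f n 0 := by
  have hn0 : 0 < n := by omega
  rintro ⟨h0, h08, h3⟩
  rw [show (0 : ℝ≥0) = ((0 : ℕ) : ℝ≥0) / n by simp, Phi3D, diaD_natCast_div_iff hn0 Nat.cast_one Nat.cast_ofNat] at h3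
  obtain ⟨a, ha1, ha2, h13, h12, h23⟩ := h3
  simp only [diaD_natCast_div_iff hn0 Nat.cast_one Nat.cast_ofNat,
    diaD_natCast_div_iff hn0 Nat.cast_ofNat Nat.cast_ofNat, phi1D_natCast_div_iff hn0,
    zero_add, one_mul, not_exists, not_and] at h13 h12 h23
  set g : ℕ → Prop := fun k => SatP f (k / n)
  obtain ⟨c, hc1, hc3, hc⟩ := h13
  obtain rfl : c = 2 * n := by
    by_contra hne
    rcases lt_or_gt_of_ne hne with h | h
    exacts [h12 c hc1 h hc, h23 c h hc3 hc]
  have hZ : ∀ k < 8 * n, ¬ g k := not_satP_natCast_div_of_not_diaD hn0 Nat.cast_ofNat h0 h08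
  obtain ⟨b, -, -, hb⟩ := (hc (n + 1) (by omega) (by omega)).1
  obtain ⟨m, hm⟩ : ∃ m, IsLeast {k | g k} m := ⟨_, isLeast_csInf ⟨_, hb⟩⟩
  have h8m : 8 * n ≤ m := not_lt.1 fun h => hZ m h hm.1
  rcases (gridPhi1_iff_of_isLeast hn hm (by omega)).1 hc with h | h
  · exact h12 (2 * n - 1) (by omega) (by omega)
      ((gridPhi1_iff_of_isLeast hn hm (by omega)).2 (Or.inr (by omega)))
  · exact h23 (2 * n + 1) (by omega) (by omega)
      ((gridPhi1_iff_of_isLeast hn hm (by omega)).2 (Or.inl (by omega)))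

end GridSemantics

theorem stmt_9_general {Ω : Type*} [MeasurableSpace Ω] (P : Measure Ω)
    (X : ℝ≥0 → Ω → ℝ) (N : Set Ω) (hPN : P N = 0)
    (hpath : ∀ ω ∉ N, Continuous (fun t => X t ω) ∧ X 0 ω = 0)
    (hτ8 : P {ω | tauInf (fun t => X t ω) = 8} = 0)
    (hτ89 : 0 < P {ω | tauInf (fun t => X t ω) ∈ Set.Ioo (8 : ℝ≥0∞) 9}) :
    (∀ n : ℕ, 2 ≤ n → {ω | PsiD (fun t => X t ω) n 0} = (∅ : Set Ω)) ∧
      (∀ n : ℕ, 2 ≤ n → P {ω | PsiD (fun t => X t ω) n 0} = 0) ∧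
      (∃ N' : Set Ω, MeasurableSet N' ∧ P N' = 0 ∧
        ({ω | Psi (fun t => X t ω) 0} ∆
          {ω | tauInf (fun t => X t ω) ∈ Set.Ioo (8 : ℝ≥0∞) 9}) ⊆ N') ∧
      ¬ Tendsto (fun n : ℕ => P {ω | PsiD (fun t => X t ω) n 0}) atTop
        (𝓝 (P {ω | tauInf (fun t => X t ω) ∈ Set.Ioo (8 : ℝ≥0∞) 9})) := by
  have hempty : ∀ n : ℕ, 2 ≤ n → {ω | PsiD (fun t => X t ω) n 0} = (∅ : Set Ω) :=
    fun n hn => eq_empty_of_forall_notMem fun ω => not_psiD_zero _ hn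
  have hzero : ∀ n : ℕ, 2 ≤ n → P {ω | PsiD (fun t => X t ω) n 0} = 0 :=
    fun n hn => by rw [hempty n hn, measure_empty]
  have hsub : {ω | Psi (fun t => X t ω) 0} ∆ {ω | tauInf (fun t => X t ω) ∈ Ioo 8 9} ⊆
      N ∪ {ω | tauInf (fun t => X t ω) = 8} := by
    intro ω hω
    by_contra hgood
    rw [mem_union, not_or] at hgood
    have hiff := psi_zero_iff (hpath ω hgood.1).1 hgood.2
    exact (mem_symmDiff.1 hω).elim (fun h => h.2 (hiff.1 h.1)) (fun h => h.2 (hiff.2 h.1))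
  obtain ⟨N', hsubN', hN'meas, hPN'⟩ :=
    exists_measurable_superset_of_null (measure_union_null hPN hτ8)
  refine ⟨hempty, hzero, ⟨N', hN'meas, hPN', hsub.trans hsubN'⟩, fun h => hτ89.ne' ?_⟩
  exact tendsto_nhds_unique h <|
    tendsto_const_nhds.congr' (eventually_atTop.2 ⟨2, fun n hn => (hzero n hn).symm⟩)

/-- the probability of the discretized semantics of `ψ` at time `0`
(which vanishes for all `n ≥ 2`, the corresponding event being empty) does not converge to
the probability of the continuous semantics of `ψ` at time `0`, which agrees up to a null set
with the positive-probability event `{τ ∈ (8,9)}`. -/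
theorem stmt_9 {Ω : Type*} [MeasurableSpace Ω] (P : Measure Ω) [IsProbabilityMeasure P]
    (X : ℝ≥0 → Ω → ℝ) (N : Set Ω) (hNmeas : MeasurableSet N) (hPN : P N = 0)
    (hpath : ∀ ω ∉ N, Continuous (fun t => X t ω) ∧ X 0 ω = 0)
    (hτmeas : Measurable fun ω => tauInf fun t => X t ω)
    (hτ8 : P {ω | tauInf (fun t => X t ω) = 8} = 0)
    (hτ89 : 0 < P {ω | tauInf (fun t => X t ω) ∈ Set.Ioo (8 : ℝ≥0∞) 9}) :
    (∀ n : ℕ, 2 ≤ n → {ω | PsiD (fun t => X t ω) n 0} = (∅ : Set Ω)) ∧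
      (∀ n : ℕ, 2 ≤ n → P {ω | PsiD (fun t => X t ω) n 0} = 0) ∧
      (∃ N' : Set Ω, MeasurableSet N' ∧ P N' = 0 ∧
        ({ω | Psi (fun t => X t ω) 0} ∆
          {ω | tauInf (fun t => X t ω) ∈ Set.Ioo (8 : ℝ≥0∞) 9}) ⊆ N') ∧
      ¬ Tendsto (fun n : ℕ => P {ω | PsiD (fun t => X t ω) n 0}) atTop
        (𝓝 (P {ω | tauInf (fun t => X t ω) ∈ Set.Ioo (8 : ℝ≥0∞) 9})) :=
  stmt_9_general P X N hPN hpath hτ8 hτ89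
end

section
/- Let A ⊆ [0,∞) be any set and let 0 ≤ S < T be real numbers. Define D := {t ∈ [0,∞) : ∃ s ∈ [S,T], t+s ∈ A}. Then the frontier of D in [0,∞) is contained in {t ∈ [0,∞) : t+S ∈ ∂A} ∪ {t ∈ [0,∞) : t+T ∈ ∂A}, where ∂A denotes the frontier of A in the subspace topology of [0,∞) ⊆ ℝ. -/
/-!
Write `D = {t | ∃ s ∈ [S,T], t + s ∈ A}`. Since `[S,T]` is compact, every `t ∈ closure D` has
some `t + s` in `closure A`, and `t ∈ interior D` as soon as some `t + s` lies in `interior A`.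
If `t ∈ frontier D`, the first fact gives `s ∈ [S,T]` with `t + s ∈ closure A`, and
`s` must be an endpoint: for `S < s < T`, the neighbourhood `(t + S, t + T)` of `t + s` contains a
point `a ∈ A`, and then every `t'` with `t' + S < a < t' + T` lies in `D`. At an endpoint, the
second fact gives `t + s ∉ interior A`, so `t + s ∈ frontier A`.
-/

open scoped NNReal Topology

section

variable {X Y Z : Type*} [TopologicalSpace X] [TopologicalSpace Z]

theorem closure_setOf_exists_mem_subset [TopologicalSpace Y] {K : Set Y} (hK : IsCompact K)
    {f : X → Y → Z} (hf : Continuous (Function.uncurry f)) (A : Set Z) :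
    closure {x | ∃ y ∈ K, f x y ∈ A} ⊆ {x | ∃ y ∈ K, f x y ∈ closure A} := by
  have : CompactSpace K := isCompact_iff_compactSpace.mp hK
  have hclosed : IsClosed (Prod.fst '' {p : X × K | f p.1 p.2 ∈ closure A}) :=
    isClosedMap_fst_of_compactSpace _ <| isClosed_closure.preimage <|
      hf.comp (continuous_fst.prodMk (continuous_subtype_val.comp continuous_snd))
  have himage : Prod.fst '' {p : X × K | f p.1 p.2 ∈ closure A} =
      {x | ∃ y ∈ K, f x y ∈ closure A} := by
    ext x; simp
  rw [← himage]
  refine closure_minimal ?_ hclosed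
  rintro x ⟨y, hy, hxy⟩
  exact ⟨(x, ⟨y, hy⟩), subset_closure hxy, rfl⟩

theorem setOf_exists_mem_interior_subset_interior (K : Set Y) {f : X → Y → Z}
    (hf : ∀ y, Continuous (f · y)) (A : Set Z) :
    {x | ∃ y ∈ K, f x y ∈ interior A} ⊆ interior {x | ∃ y ∈ K, f x y ∈ A} := by
  refine interior_maximal (fun x ⟨y, hy, hxy⟩ ↦ ⟨y, hy, interior_subset hxy⟩) ?_
  rw [isOpen_iff_mem_nhds]
  rintro x ⟨y, hy, hxy⟩
  exact Filter.mem_of_superset (((hf y).isOpen_preimage _ isOpen_interior).mem_nhds hxy)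
    fun x' hx' ↦ ⟨y, hy, hx'⟩

end

namespace NNReal

theorem mem_setOf_exists_mem_Icc_add_mem {A : Set ℝ≥0} {S T t a : ℝ≥0} (ha : a ∈ A)
    (hSa : t + S ≤ a) (haT : a ≤ t + T) :
    t ∈ {t : ℝ≥0 | ∃ s ∈ Set.Icc S T, t + s ∈ A} := by
  obtain ⟨s, rfl⟩ := exists_add_of_le (le_self_add.trans hSa)
  exact ⟨s, ⟨(add_le_add_iff_left t).mp hSa, (add_le_add_iff_left t).mp haT⟩, ha⟩

theorem mem_interior_setOf_exists_mem_Icc_add_mem {A : Set ℝ≥0} {S T t s : ℝ≥0}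
    (hs : s ∈ Set.Ioo S T) (hts : t + s ∈ closure A) :
    t ∈ interior {t : ℝ≥0 | ∃ s ∈ Set.Icc S T, t + s ∈ A} := by
  obtain ⟨a, ⟨hSa, haT⟩, ha⟩ := mem_closure_iff.mp hts (Set.Ioo (t + S) (t + T)) isOpen_Ioo
    ⟨add_lt_add_right hs.1 t, add_lt_add_right hs.2 t⟩
  have hopen : IsOpen {t' : ℝ≥0 | t' + S < a ∧ a < t' + T} :=
    (isOpen_lt (by fun_prop) continuous_const).inter (isOpen_lt continuous_const (by fun_prop))
  exact interior_maximal (fun t' ht' ↦ mem_setOf_exists_mem_Icc_add_mem ha ht'.1.le ht'.2.le)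
    hopen ⟨hSa, haT⟩

end NNReal

theorem stmt_10_general (A : Set ℝ≥0) (S T : ℝ≥0) :
    frontier {t : ℝ≥0 | ∃ s ∈ Set.Icc S T, t + s ∈ A} ⊆
      {t : ℝ≥0 | t + S ∈ frontier A} ∪ {t : ℝ≥0 | t + T ∈ frontier A} := by
  rintro t ⟨htD, htD'⟩
  obtain ⟨s, ⟨hSs, hsT⟩, hts⟩ :=
    closure_setOf_exists_mem_subset isCompact_Icc continuous_add A htD
  have not_interior {r : ℝ≥0} (hr : r ∈ Set.Icc S T) : t + r ∉ interior A := fun h ↦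
    htD' <| setOf_exists_mem_interior_subset_interior _ (fun _ ↦ by fun_prop) A ⟨r, hr, h⟩
  rcases hSs.eq_or_lt with rfl | hSs
  · exact Or.inl ⟨hts, not_interior ⟨le_rfl, hsT⟩⟩
  rcases hsT.eq_or_lt with rfl | hsT
  · exact Or.inr ⟨hts, not_interior ⟨hSs.le, le_rfl⟩⟩
  exact absurd (NNReal.mem_interior_setOf_exists_mem_Icc_add_mem ⟨hSs, hsT⟩ hts) htD'

/-- for any `A ⊆ [0,∞)` and reals `0 ≤ S < T`, the frontier (in `[0,∞)`) of
`D = {t : ∃ s ∈ [S,T], t+s ∈ A}` is contained in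
`{t : t+S ∈ ∂A} ∪ {t : t+T ∈ ∂A}`. -/
theorem stmt_10 (A : Set ℝ≥0) (S T : ℝ≥0) (hST : S < T) :
    frontier {t : ℝ≥0 | ∃ s ∈ Set.Icc S T, t + s ∈ A} ⊆
      {t : ℝ≥0 | t + S ∈ frontier A} ∪ {t : ℝ≥0 | t + T ∈ frontier A} :=
  stmt_10_general A S T
end

section
/- Let f : [0,∞) → ℝ be continuous and y ∈ ℝ. Assume: (a) the level set {t ∈ [0,∞) : f(t) = y} has no isolated points; (b) every point of local maximum of f is a point of strict local maximum; (c) every point of local minimum of f is a point of strict local minimum. Then for A := {t ∈ [0,∞) : f(t) ≥ y} one has A ⊆ closure(interior A) and ([0,∞)∖A) ⊆ closure(interior([0,∞)∖A)), and the same two inclusions hold for A' := {t ∈ [0,∞) : f(t) > y}. -/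
open scoped NNReal Topology

/-- `t` is a point of local maximum of `f : [0,∞) → ℝ`: for some `δ > 0`,
`f(s) ≤ f(t)` for all `s ∈ [max(t−δ,0), t+δ]` (truncated subtraction realises the `max`). -/
def IsLocMaxPt (f : ℝ≥0 → ℝ) (t : ℝ≥0) : Prop :=
  ∃ δ : ℝ≥0, 0 < δ ∧ ∀ s, t - δ ≤ s → s ≤ t + δ → f s ≤ f t

/-- `t` is a point of strict local maximum of `f`. -/
def IsStrictLocMaxPt (f : ℝ≥0 → ℝ) (t : ℝ≥0) : Prop :=
  ∃ δ : ℝ≥0, 0 < δ ∧ ∀ s, t - δ ≤ s → s ≤ t + δ → s ≠ t → f s < f t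

/-- `t` is a point of local minimum of `f`. -/
def IsLocMinPt (f : ℝ≥0 → ℝ) (t : ℝ≥0) : Prop :=
  ∃ δ : ℝ≥0, 0 < δ ∧ ∀ s, t - δ ≤ s → s ≤ t + δ → f t ≤ f s

/-- `t` is a point of strict local minimum of `f`. -/
def IsStrictLocMinPt (f : ℝ≥0 → ℝ) (t : ℝ≥0) : Prop :=
  ∃ δ : ℝ≥0, 0 < δ ∧ ∀ s, t - δ ≤ s → s ≤ t + δ → s ≠ t → f t < f s


lemma icc_mem_nhds' (t δ : ℝ≥0) (hδ : 0 < δ) : Set.Icc (t - δ) (t + δ) ∈ 𝓝 t := by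
  have hb : Metric.ball t δ ⊆ Set.Icc (t - δ) (t + δ) := by
    intro s hs
    simp only [Metric.mem_ball, NNReal.dist_eq, abs_lt] at hs
    constructor
    · rw [tsub_le_iff_right]
      have : (t : ℝ) ≤ s + δ := by linarith [hs.1]
      exact_mod_cast this
    · have : (s : ℝ) ≤ t + δ := by linarith [hs.2]
      exact_mod_cast this
  exact Filter.mem_of_superset (Metric.ball_mem_nhds t (by exact_mod_cast hδ)) hb

lemma notMem_closure' (t : ℝ≥0) (S : Set ℝ≥0) (h : t ∉ closure S) :
    ∃ δ : ℝ≥0, 0 < δ ∧ ∀ s, t - δ ≤ s → s ≤ t + δ → s ∉ S := by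
  rw [Metric.mem_closure_iff] at h
  push_neg at h
  obtain ⟨ε, hε, hb⟩ := h
  have hεp : 0 < ε.toNNReal / 2 := div_pos (Real.toNNReal_pos.mpr hε) (by norm_num)
  refine ⟨ε.toNNReal / 2, hεp, fun s h1 h2 hsS => ?_⟩
  refine absurd (show dist t s < ε from ?_) (not_lt.mpr (hb s hsS))
  rw [NNReal.dist_eq, abs_lt]
  have e2 : (ε.toNNReal : ℝ) = ε := Real.coe_toNNReal _ hε.le
  rw [tsub_le_iff_right] at h1
  have h1' : (t : ℝ) ≤ s + ε.toNNReal / 2 := by exact_mod_cast h1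
  have h2' : (s : ℝ) ≤ t + ε.toNNReal / 2 := by exact_mod_cast h2
  constructor <;> linarith

lemma key (f : ℝ≥0 → ℝ) (hf : Continuous f) (y : ℝ)
    (hlev : ∀ t, f t = y → 𝓝[{u | f u = y} \ {t}] t ≠ ⊥)
    (hmax : ∀ t, IsLocMaxPt f t → IsStrictLocMaxPt f t) :
    {t | y ≤ f t} ⊆ closure (interior {t | y ≤ f t}) := by
  intro t ht
  by_contra hc
  have hopen : IsOpen {s : ℝ≥0 | y < f s} := isOpen_lt continuous_const hf
  have hsub : {s : ℝ≥0 | y < f s} ⊆ interior {s : ℝ≥0 | y ≤ f s} :=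
    interior_maximal (fun s (hs : y < f s) => le_of_lt hs) hopen
  obtain ⟨δ, hδ, hδ'⟩ := notMem_closure' t _ hc
  have hle : ∀ s, t - δ ≤ s → s ≤ t + δ → f s ≤ y := by
    intro s h1 h2
    by_contra h
    exact hδ' s h1 h2 (hsub (lt_of_not_ge h))
  have hfty : f t = y := le_antisymm (hle t tsub_le_self le_self_add) ht
  have hlm : IsLocMaxPt f t :=
    ⟨δ, hδ, fun s h1 h2 => (hle s h1 h2).trans_eq hfty.symm⟩
  obtain ⟨δ', hδ'0, hs⟩ := hmax t hlm
  have hne : (𝓝[{u | f u = y} \ {t}] t).NeBot := ⟨hlev t hfty⟩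
  have hmem : Set.Icc (t - δ') (t + δ') ∈ 𝓝[{u | f u = y} \ {t}] t :=
    mem_nhdsWithin_of_mem_nhds (icc_mem_nhds' t δ' hδ'0)
  obtain ⟨s, hsI, hsf, hst⟩ :=
    Filter.nonempty_of_mem (Filter.inter_mem hmem self_mem_nhdsWithin)
  have := hs s hsI.1 hsI.2 hst
  rw [hfty, hsf] at this
  exact lt_irrefl y this

/-- if `f : [0,∞) → ℝ` is continuous, the level set `{f = y}` has no isolated
points, and all local maxima and minima of `f` are strict, then both
`A = {f ≥ y}` and `A' = {f > y}` satisfy `A ⊆ cl(int A)` and `Aᶜ ⊆ cl(int Aᶜ)`. -/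
theorem stmt_11 (f : ℝ≥0 → ℝ) (hf : Continuous f) (y : ℝ)
    (hlev : ∀ t, f t = y → 𝓝[{u | f u = y} \ {t}] t ≠ ⊥)
    (hmax : ∀ t, IsLocMaxPt f t → IsStrictLocMaxPt f t)
    (hmin : ∀ t, IsLocMinPt f t → IsStrictLocMinPt f t) :
    ({t | y ≤ f t} ⊆ closure (interior {t | y ≤ f t})) ∧
      ({t | y ≤ f t}ᶜ ⊆ closure (interior {t | y ≤ f t}ᶜ)) ∧
      ({t | y < f t} ⊆ closure (interior {t | y < f t})) ∧
      ({t | y < f t}ᶜ ⊆ closure (interior {t | y < f t}ᶜ)) := by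
  have h1 := key f hf y hlev hmax
  have h2 : {t : ℝ≥0 | y < f t}ᶜ ⊆ closure (interior {t : ℝ≥0 | y < f t}ᶜ) := by
    have hlev' : ∀ t, (fun u => -f u) t = -y → 𝓝[{u | (fun u => -f u) u = -y} \ {t}] t ≠ ⊥ := by
      intro t htf
      have hfy : f t = y := by
        have : -f t = -y := htf
        linarith
      have hset : {u : ℝ≥0 | -f u = -y} = {u | f u = y} := by
        ext u; constructor <;> intro h <;> simp only [Set.mem_setOf_eq] at * <;> linarith
      rw [hset]
      exact hlev t hfy
    have hmax' : ∀ t, IsLocMaxPt (fun u => -f u) t → IsStrictLocMaxPt (fun u => -f u) t := by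
      intro t ⟨δ, hδ, h⟩
      obtain ⟨δ', hδ', h'⟩ := hmin t ⟨δ, hδ, fun s h1 h2 => by simpa using h s h1 h2⟩
      exact ⟨δ', hδ', fun s h1 h2 hst => by simpa using h' s h1 h2 hst⟩
    have := key (fun u => -f u) hf.neg (-y) hlev' hmax'
    have hset : {t : ℝ≥0 | -y ≤ -f t} = {t : ℝ≥0 | y < f t}ᶜ := by
      ext u; simp [not_lt]
    rwa [hset] at this
  have hopen_lt : IsOpen {t : ℝ≥0 | f t < y} := isOpen_lt hf continuous_const
  have hopen_gt : IsOpen {t : ℝ≥0 | y < f t} := isOpen_lt continuous_const hf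
  have hcle : {t : ℝ≥0 | y ≤ f t}ᶜ = {t | f t < y} := by
    ext u; simp [not_le]
  refine ⟨h1, ?_, ?_, h2⟩
  · rw [hcle, hopen_lt.interior_eq]; exact subset_closure
  · rw [hopen_gt.interior_eq]; exact subset_closure
end

section
/- Let f : [0,∞) → ℝ be continuous, let y₁ < y₂ be real numbers, and let I ⊆ ℝ be an interval with (y₁,y₂) ⊆ I ⊆ [y₁,y₂]. Assume: (a) the level sets {t ∈ [0,∞) : f(t) = y₁} and {t ∈ [0,∞) : f(t) = y₂} have no isolated points; (b) every point of local maximum of f is a point of strict local maximum; (c) every point of local minimum of f is a point of strict local minimum. Then for A := {t ∈ [0,∞) : f(t) ∈ I} one has A ⊆ closure(interior A) and ([0,∞)∖A) ⊆ closure(interior([0,∞)∖A)). -/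
open scoped NNReal Topology

lemma my_dist_le_of_mem (t s δ : ℝ≥0) (h1 : t - δ ≤ s) (h2 : s ≤ t + δ) :
    dist s t ≤ (δ : ℝ) := by
  rw [NNReal.dist_eq, abs_le]
  have h1' : (t : ℝ) ≤ (s : ℝ) + δ := by exact_mod_cast tsub_le_iff_right.mp h1
  have h2' : (s : ℝ) ≤ (t : ℝ) + δ := by exact_mod_cast h2
  constructor <;> linarith

lemma my_mem_of_dist_lt (t s δ : ℝ≥0) (h : dist t s < (δ : ℝ)) :
    t - δ ≤ s ∧ s ≤ t + δ := by
  rw [NNReal.dist_eq, abs_lt] at h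
  constructor
  · rw [tsub_le_iff_right]
    have : (t : ℝ) ≤ (s : ℝ) + δ := by linarith [h.2]
    exact_mod_cast this
  · have : (s : ℝ) ≤ (t : ℝ) + δ := by linarith [h.1]
    exact_mod_cast this

lemma key_gt (f : ℝ≥0 → ℝ) (y : ℝ) (t : ℝ≥0)
    (ht : f t = y) (hlev : 𝓝[{u | f u = y} \ {t}] t ≠ ⊥)
    (hmax : ∀ t, IsLocMaxPt f t → IsStrictLocMaxPt f t) :
    t ∈ closure {s | y < f s} := by
  by_contra h
  rw [Metric.mem_closure_iff] at h
  push_neg at h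
  obtain ⟨ε, hε, hle⟩ := h
  set δ : ℝ≥0 := (ε/2).toNNReal with hδdef
  have hδpos : 0 < δ := Real.toNNReal_pos.mpr (by linarith)
  have hδcoe : (δ : ℝ) = ε/2 := Real.coe_toNNReal _ (by linarith)
  have hmaxt : IsLocMaxPt f t := by
    refine ⟨δ, hδpos, fun s h1 h2 => ?_⟩
    by_contra hfs
    push_neg at hfs
    have hy' : s ∈ {s | y < f s} := by simpa [ht] using hfs
    have hd : dist s t ≤ (δ : ℝ) := my_dist_le_of_mem t s δ h1 h2
    have h3 : ε ≤ dist t s := hle s hy'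
    rw [dist_comm] at h3
    rw [hδcoe] at hd
    linarith
  obtain ⟨δ', hδ'pos, hstrict⟩ := hmax t hmaxt
  have hcl : t ∈ closure ({u | f u = y} \ {t}) :=
    mem_closure_iff_nhdsWithin_neBot.mpr ⟨hlev⟩
  rw [Metric.mem_closure_iff] at hcl
  obtain ⟨s, hs, hds⟩ := hcl (δ' : ℝ) (by exact_mod_cast hδ'pos)
  obtain ⟨h1, h2⟩ := my_mem_of_dist_lt t s δ' hds
  have hlt := hstrict s h1 h2 hs.2
  rw [hs.1, ht] at hlt
  exact lt_irrefl y hlt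

lemma key_lt (f : ℝ≥0 → ℝ) (y : ℝ) (t : ℝ≥0)
    (ht : f t = y) (hlev : 𝓝[{u | f u = y} \ {t}] t ≠ ⊥)
    (hmin : ∀ t, IsLocMinPt f t → IsStrictLocMinPt f t) :
    t ∈ closure {s | f s < y} := by
  by_contra h
  rw [Metric.mem_closure_iff] at h
  push_neg at h
  obtain ⟨ε, hε, hle⟩ := h
  set δ : ℝ≥0 := (ε/2).toNNReal with hδdef
  have hδpos : 0 < δ := Real.toNNReal_pos.mpr (by linarith)
  have hδcoe : (δ : ℝ) = ε/2 := Real.coe_toNNReal _ (by linarith)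
  have hmint : IsLocMinPt f t := by
    refine ⟨δ, hδpos, fun s h1 h2 => ?_⟩
    by_contra hfs
    push_neg at hfs
    have hy' : s ∈ {s | f s < y} := by simpa [ht] using hfs
    have hd : dist s t ≤ (δ : ℝ) := my_dist_le_of_mem t s δ h1 h2
    have h3 : ε ≤ dist t s := hle s hy'
    rw [dist_comm] at h3
    rw [hδcoe] at hd
    linarith
  obtain ⟨δ', hδ'pos, hstrict⟩ := hmin t hmint
  have hcl : t ∈ closure ({u | f u = y} \ {t}) :=
    mem_closure_iff_nhdsWithin_neBot.mpr ⟨hlev⟩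
  rw [Metric.mem_closure_iff] at hcl
  obtain ⟨s, hs, hds⟩ := hcl (δ' : ℝ) (by exact_mod_cast hδ'pos)
  obtain ⟨h1, h2⟩ := my_mem_of_dist_lt t s δ' hds
  have hlt := hstrict s h1 h2 hs.2
  rw [hs.1, ht] at hlt
  exact lt_irrefl y hlt

/-- let `f : [0,∞) → ℝ` be continuous, `y₁ < y₂`, and `I` an interval with
`(y₁,y₂) ⊆ I ⊆ [y₁,y₂]`. If the level sets `{f = y₁}` and `{f = y₂}` have no isolated points
and all local maxima and minima of `f` are strict, then `A = {t : f(t) ∈ I}` satisfies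
`A ⊆ cl(int A)` and `Aᶜ ⊆ cl(int Aᶜ)`. -/
theorem stmt_12 (f : ℝ≥0 → ℝ) (hf : Continuous f) (y₁ y₂ : ℝ) (hy : y₁ < y₂)
    (I : Set ℝ) (hI₁ : Set.Ioo y₁ y₂ ⊆ I) (hI₂ : I ⊆ Set.Icc y₁ y₂)
    (hlev₁ : ∀ t, f t = y₁ → 𝓝[{u | f u = y₁} \ {t}] t ≠ ⊥)
    (hlev₂ : ∀ t, f t = y₂ → 𝓝[{u | f u = y₂} \ {t}] t ≠ ⊥)
    (hmax : ∀ t, IsLocMaxPt f t → IsStrictLocMaxPt f t)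
    (hmin : ∀ t, IsLocMinPt f t → IsStrictLocMinPt f t) :
    ({t | f t ∈ I} ⊆ closure (interior {t | f t ∈ I})) ∧
      ({t | f t ∈ I}ᶜ ⊆ closure (interior {t | f t ∈ I}ᶜ)) := by
  have hopen₁ : IsOpen {s : ℝ≥0 | f s < y₁} := isOpen_lt hf continuous_const
  have hopen₂ : IsOpen {s : ℝ≥0 | y₂ < f s} := isOpen_lt continuous_const hf
  have hopenlt : IsOpen {s : ℝ≥0 | y₁ < f s} := isOpen_lt continuous_const hf
  have hopengt : IsOpen {s : ℝ≥0 | f s < y₂} := isOpen_lt hf continuous_const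
  have hopenIoo : IsOpen {s : ℝ≥0 | y₁ < f s ∧ f s < y₂} := hopenlt.inter hopengt
  have hsubIoo : {s : ℝ≥0 | y₁ < f s ∧ f s < y₂} ⊆ interior {t | f t ∈ I} :=
    interior_maximal (fun s hs => hI₁ ⟨hs.1, hs.2⟩) hopenIoo
  constructor
  · intro t ht
    simp only [Set.mem_setOf_eq] at ht
    have hIcc := hI₂ ht
    have hmono := closure_mono hsubIoo
    rcases lt_or_eq_of_le hIcc.1 with h1 | h1
    · rcases lt_or_eq_of_le hIcc.2 with h2 | h2
      · exact hmono (subset_closure ⟨h1, h2⟩)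
      · have hk := key_lt f y₂ t h2 (hlev₂ t h2) hmin
        have : t ∈ closure ({s : ℝ≥0 | y₁ < f s} ∩ {s | f s < y₂}) :=
          hopenlt.inter_closure ⟨h1, hk⟩
        exact hmono this
    · have hk := key_gt f y₁ t h1.symm (hlev₁ t h1.symm) hmax
      have ht2 : f t < y₂ := by rw [← h1]; exact hy
      have : t ∈ closure ({s : ℝ≥0 | f s < y₂} ∩ {s | y₁ < f s}) :=
        hopengt.inter_closure ⟨ht2, hk⟩
      refine hmono (closure_mono ?_ this)
      intro s hs; exact ⟨hs.2, hs.1⟩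
  · intro t ht
    simp only [Set.mem_compl_iff, Set.mem_setOf_eq] at ht
    have hsub1 : {s : ℝ≥0 | f s < y₁} ⊆ interior {t | f t ∈ I}ᶜ :=
      interior_maximal (fun s hs hmem => absurd (hI₂ hmem).1 (not_le.mpr hs)) hopen₁
    have hsub2 : {s : ℝ≥0 | y₂ < f s} ⊆ interior {t | f t ∈ I}ᶜ :=
      interior_maximal (fun s hs hmem => absurd (hI₂ hmem).2 (not_le.mpr hs)) hopen₂
    rcases lt_trichotomy (f t) y₁ with h | h | h
    · exact subset_closure (hsub1 h)
    · exact closure_mono hsub1 (key_lt f y₁ t h (hlev₁ t h) hmin)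
    · rcases lt_trichotomy (f t) y₂ with h' | h' | h'
      · exact absurd (hI₁ ⟨h, h'⟩) ht
      · exact closure_mono hsub2 (key_gt f y₂ t h' (hlev₂ t h') hmax)
      · exact subset_closure (hsub2 h')
end

section
/- Let f : [0,∞) → ℝ be continuous, and let I₁, …, I_k be finitely many intervals of ℝ with endpoints x_i < y_i satisfying (x_i,y_i) ⊆ I_i ⊆ [x_i,y_i] and with pairwise disjoint closures (i.e., [x_i,y_i] ∩ [x_j,y_j] = ∅ for i ≠ j). Assume: (a) for every endpoint c ∈ {x₁,y₁,…,x_k,y_k}, the level set {t ∈ [0,∞) : f(t) = c} has no isolated points; (b) every point of local maximum of f is a point of strict local maximum; (c) every point of local minimum of f is a point of strict local minimum. Then for A := {t ∈ [0,∞) : f(t) ∈ ⋃_{i=1}^k I_i} one has A ⊆ closure(interior A) and ([0,∞)∖A) ⊆ closure(interior([0,∞)∖A)). -/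
open scoped NNReal Topology

lemma mem_cb {t s : ℝ≥0} {δ : ℝ≥0} :
    s ∈ Metric.closedBall t (δ : ℝ) ↔ t - δ ≤ s ∧ s ≤ t + δ := by
  rw [Metric.mem_closedBall, NNReal.dist_eq, abs_sub_le_iff]
  constructor
  · rintro ⟨h1, h2⟩
    refine ⟨?_, ?_⟩
    · rw [tsub_le_iff_right]
      have : (t : ℝ) ≤ (s : ℝ) + (δ : ℝ) := by linarith
      exact_mod_cast this
    · have : (s : ℝ) ≤ (t : ℝ) + (δ : ℝ) := by linarith
      exact_mod_cast this
  · rintro ⟨h1, h2⟩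
    rw [tsub_le_iff_right] at h1
    have h1' : (t : ℝ) ≤ (s : ℝ) + (δ : ℝ) := by exact_mod_cast h1
    have h2' : (s : ℝ) ≤ (t : ℝ) + (δ : ℝ) := by exact_mod_cast h2
    constructor <;> linarith

lemma cb_mem_nhds (t : ℝ≥0) {δ : ℝ≥0} (hδ : 0 < δ) :
    Metric.closedBall t (δ : ℝ) ∈ 𝓝 t :=
  Metric.closedBall_mem_nhds t (by exact_mod_cast hδ)

lemma not_strictmax {f : ℝ≥0 → ℝ} {t : ℝ≥0}
    (h : 𝓝[{u | f u = f t} \ {t}] t ≠ ⊥) : ¬ IsStrictLocMaxPt f t := by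
  rintro ⟨δ, hδ, hs⟩
  have hcl : t ∈ closure ({u | f u = f t} \ {t}) :=
    mem_closure_iff_nhdsWithin_neBot.mpr (Filter.neBot_iff.mpr h)
  obtain ⟨s, hsU, hsf, hst⟩ := mem_closure_iff_nhds.mp hcl _ (cb_mem_nhds t hδ)
  have := hs s (mem_cb.mp hsU).1 (mem_cb.mp hsU).2 hst
  exact absurd hsf (ne_of_lt this)

lemma not_strictmin {f : ℝ≥0 → ℝ} {t : ℝ≥0}
    (h : 𝓝[{u | f u = f t} \ {t}] t ≠ ⊥) : ¬ IsStrictLocMinPt f t := by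
  rintro ⟨δ, hδ, hs⟩
  have hcl : t ∈ closure ({u | f u = f t} \ {t}) :=
    mem_closure_iff_nhdsWithin_neBot.mpr (Filter.neBot_iff.mpr h)
  obtain ⟨s, hsU, hsf, hst⟩ := mem_closure_iff_nhds.mp hcl _ (cb_mem_nhds t hδ)
  have := hs s (mem_cb.mp hsU).1 (mem_cb.mp hsU).2 hst
  exact absurd hsf (ne_of_gt this)

lemma locmax_of {f : ℝ≥0 → ℝ} (hf : Continuous f) {t : ℝ≥0} {b : ℝ} (hb : f t < b)
    {U : Set ℝ≥0} (hU : U ∈ 𝓝 t) (h : ∀ s ∈ U, f s ∉ Set.Ioo (f t) b) :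
    IsLocMaxPt f t := by
  have hV : U ∩ f ⁻¹' Set.Iio b ∈ 𝓝 t :=
    Filter.inter_mem hU ((isOpen_Iio.preimage hf).mem_nhds hb)
  obtain ⟨ε, hε, hεsub⟩ := Metric.nhds_basis_closedBall.mem_iff.mp hV
  refine ⟨ε.toNNReal, Real.toNNReal_pos.mpr hε, fun s h1 h2 => ?_⟩
  have hs : s ∈ Metric.closedBall t ε := by
    have := mem_cb.mpr ⟨h1, h2⟩
    rwa [Real.coe_toNNReal _ hε.le] at this
  have hsV := hεsub hs
  by_contra hlt
  exact h s hsV.1 ⟨lt_of_not_ge hlt, hsV.2⟩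

lemma locmin_of {f : ℝ≥0 → ℝ} (hf : Continuous f) {t : ℝ≥0} {a : ℝ} (ha : a < f t)
    {U : Set ℝ≥0} (hU : U ∈ 𝓝 t) (h : ∀ s ∈ U, f s ∉ Set.Ioo a (f t)) :
    IsLocMinPt f t := by
  have hV : U ∩ f ⁻¹' Set.Ioi a ∈ 𝓝 t :=
    Filter.inter_mem hU ((isOpen_Ioi.preimage hf).mem_nhds ha)
  obtain ⟨ε, hε, hεsub⟩ := Metric.nhds_basis_closedBall.mem_iff.mp hV
  refine ⟨ε.toNNReal, Real.toNNReal_pos.mpr hε, fun s h1 h2 => ?_⟩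
  have hs : s ∈ Metric.closedBall t ε := by
    have := mem_cb.mpr ⟨h1, h2⟩
    rwa [Real.coe_toNNReal _ hε.le] at this
  have hsV := hεsub hs
  by_contra hlt
  exact h s hsV.1 ⟨hsV.2, lt_of_not_ge hlt⟩

lemma cluster_upper {f : ℝ≥0 → ℝ} (hf : Continuous f)
    (hmax : ∀ t, IsLocMaxPt f t → IsStrictLocMaxPt f t) {t : ℝ≥0} {b : ℝ} (hb : f t < b)
    (hlev' : 𝓝[{u | f u = f t} \ {t}] t ≠ ⊥) :
    t ∈ closure (f ⁻¹' Set.Ioo (f t) b) := by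
  by_contra hc
  rw [mem_closure_iff_nhds] at hc
  push_neg at hc
  obtain ⟨U, hU, hUe⟩ := hc
  have h : ∀ s ∈ U, f s ∉ Set.Ioo (f t) b := fun s hs hfs =>
    Set.eq_empty_iff_forall_notMem.mp hUe s ⟨hs, hfs⟩
  exact not_strictmax hlev' (hmax t (locmax_of hf hb hU h))

lemma cluster_lower {f : ℝ≥0 → ℝ} (hf : Continuous f)
    (hmin : ∀ t, IsLocMinPt f t → IsStrictLocMinPt f t) {t : ℝ≥0} {a : ℝ} (ha : a < f t)
    (hlev' : 𝓝[{u | f u = f t} \ {t}] t ≠ ⊥) :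
    t ∈ closure (f ⁻¹' Set.Ioo a (f t)) := by
  by_contra hc
  rw [mem_closure_iff_nhds] at hc
  push_neg at hc
  obtain ⟨U, hU, hUe⟩ := hc
  have h : ∀ s ∈ U, f s ∉ Set.Ioo a (f t) := fun s hs hfs =>
    Set.eq_empty_iff_forall_notMem.mp hUe s ⟨hs, hfs⟩
  exact not_strictmin hlev' (hmin t (locmin_of hf ha hU h))

/-- let `f : [0,∞) → ℝ` be continuous and `I₁,…,I_k` intervals with endpoints
`x_i < y_i`, `(x_i,y_i) ⊆ I_i ⊆ [x_i,y_i]`, with pairwise disjoint closures. If for each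
endpoint `c` the level set `{f = c}` has no isolated points, and all local maxima and minima
of `f` are strict, then `A = {t : f(t) ∈ ⋃ᵢ Iᵢ}` satisfies `A ⊆ cl(int A)` and
`Aᶜ ⊆ cl(int Aᶜ)`. -/
theorem stmt_13 (f : ℝ≥0 → ℝ) (hf : Continuous f) (k : ℕ) (x y : Fin k → ℝ)
    (I : Fin k → Set ℝ) (hxy : ∀ i, x i < y i)
    (hI : ∀ i, Set.Ioo (x i) (y i) ⊆ I i ∧ I i ⊆ Set.Icc (x i) (y i))
    (hdisj : ∀ i j, i ≠ j → Set.Icc (x i) (y i) ∩ Set.Icc (x j) (y j) = ∅)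
    (hlev : ∀ c : ℝ, (∃ i, c = x i ∨ c = y i) →
      ∀ t, f t = c → 𝓝[{u | f u = c} \ {t}] t ≠ ⊥)
    (hmax : ∀ t, IsLocMaxPt f t → IsStrictLocMaxPt f t)
    (hmin : ∀ t, IsLocMinPt f t → IsStrictLocMinPt f t) :
    ({t | f t ∈ ⋃ i, I i} ⊆ closure (interior {t | f t ∈ ⋃ i, I i})) ∧
      ({t | f t ∈ ⋃ i, I i}ᶜ ⊆ closure (interior {t | f t ∈ ⋃ i, I i}ᶜ)) := by
  constructor
  · intro t ht
    have hO : IsOpen (⋃ i, Set.Ioo (x i) (y i)) := isOpen_iUnion fun i => isOpen_Ioo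
    have hsub : f ⁻¹' (⋃ i, Set.Ioo (x i) (y i)) ⊆
        interior {t | f t ∈ ⋃ i, I i} := by
      apply interior_maximal _ (hO.preimage hf)
      intro s hs
      obtain ⟨i, hi⟩ := Set.mem_iUnion.mp hs
      exact Set.mem_iUnion.mpr ⟨i, (hI i).1 hi⟩
    apply closure_mono hsub
    obtain ⟨i, hti⟩ := Set.mem_iUnion.mp ht
    have hIcc := (hI i).2 hti
    rcases eq_or_lt_of_le hIcc.1 with hx | hx
    · -- f t = x i
      have hlev' : 𝓝[{u | f u = f t} \ {t}] t ≠ ⊥ := hlev (f t) ⟨i, Or.inl hx.symm⟩ t rfl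
      have hcl := cluster_upper hf hmax (t := t) (b := y i) (hx ▸ hxy i) hlev'
      refine closure_mono (Set.preimage_mono ?_) hcl
      intro u hu
      exact Set.mem_iUnion.mpr ⟨i, hx ▸ hu⟩
    · rcases eq_or_lt_of_le hIcc.2 with hy | hy
      · -- f t = y i
        have hlev' : 𝓝[{u | f u = f t} \ {t}] t ≠ ⊥ := hlev (f t) ⟨i, Or.inr hy⟩ t rfl
        have hcl := cluster_lower hf hmin (t := t) (a := x i) (hy ▸ hxy i) hlev'
        refine closure_mono (Set.preimage_mono ?_) hcl
        intro u hu
        exact Set.mem_iUnion.mpr ⟨i, hy ▸ hu⟩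
      · exact subset_closure (Set.mem_iUnion.mpr ⟨i, hx, hy⟩)
  · intro t ht
    have hclosed : IsClosed (⋃ i, Set.Icc (x i) (y i)) :=
      isClosed_iUnion_of_finite fun i => isClosed_Icc
    have hO₂ : IsOpen (⋃ i, Set.Icc (x i) (y i))ᶜ := hclosed.isOpen_compl
    have hsub : f ⁻¹' (⋃ i, Set.Icc (x i) (y i))ᶜ ⊆
        interior {t | f t ∈ ⋃ i, I i}ᶜ := by
      apply interior_maximal _ (hO₂.preimage hf)
      intro s hs hsA
      obtain ⟨i, hi⟩ := Set.mem_iUnion.mp hsA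
      exact hs (Set.mem_iUnion.mpr ⟨i, (hI i).2 hi⟩)
    apply closure_mono hsub
    by_cases hc : f t ∈ ⋃ i, Set.Icc (x i) (y i)
    · obtain ⟨j, hj⟩ := Set.mem_iUnion.mp hc
      have hnotIoo : f t ∉ Set.Ioo (x j) (y j) := fun h =>
        ht (Set.mem_iUnion.mpr ⟨j, (hI j).1 h⟩)
      have hCclosed : IsClosed (⋃ i ∈ {i : Fin k | i ≠ j}, Set.Icc (x i) (y i)) :=
        (Set.toFinite _).isClosed_biUnion fun i _ => isClosed_Icc
      rcases eq_or_lt_of_le hj.1 with hx | hx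
      · -- f t = x j
        have hnot : x j ∉ (⋃ i ∈ {i : Fin k | i ≠ j}, Set.Icc (x i) (y i)) := by
          intro h
          obtain ⟨i, hi, hmem⟩ := Set.mem_iUnion₂.mp h
          have hempty := hdisj i j hi
          have : x j ∈ Set.Icc (x i) (y i) ∩ Set.Icc (x j) (y j) :=
            ⟨hmem, le_refl _, (hxy j).le⟩
          rw [hempty] at this
          exact this
        obtain ⟨ε, hε, hball⟩ := Metric.isOpen_iff.mp hCclosed.isOpen_compl (x j) hnot
        have hIoosub : Set.Ioo (f t - ε) (f t) ⊆ (⋃ i, Set.Icc (x i) (y i))ᶜ := by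
          intro u hu hmem
          obtain ⟨i, hi⟩ := Set.mem_iUnion.mp hmem
          by_cases hij : i = j
          · subst hij
            have h1 := hi.1
            have h2 := hu.2
            rw [← hx] at h2
            linarith
          · refine hball ?_ (Set.mem_iUnion₂.mpr ⟨i, hij, hi⟩)
            rw [Metric.mem_ball, Real.dist_eq, abs_sub_lt_iff]
            have h1 := hu.1
            have h2 := hu.2
            rw [← hx] at h1 h2
            constructor <;> linarith
        have hlev' : 𝓝[{u | f u = f t} \ {t}] t ≠ ⊥ := hlev (f t) ⟨j, Or.inl hx.symm⟩ t rfl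
        have hcl := cluster_lower hf hmin (t := t) (a := f t - ε) (by linarith) hlev'
        exact closure_mono (Set.preimage_mono hIoosub) hcl
      · rcases eq_or_lt_of_le hj.2 with hy | hy
        · -- f t = y j
          have hnot : y j ∉ (⋃ i ∈ {i : Fin k | i ≠ j}, Set.Icc (x i) (y i)) := by
            intro h
            obtain ⟨i, hi, hmem⟩ := Set.mem_iUnion₂.mp h
            have hempty := hdisj i j hi
            have : y j ∈ Set.Icc (x i) (y i) ∩ Set.Icc (x j) (y j) :=
              ⟨hmem, (hxy j).le, le_refl _⟩
            rw [hempty] at this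
            exact this
          obtain ⟨ε, hε, hball⟩ := Metric.isOpen_iff.mp hCclosed.isOpen_compl (y j) hnot
          have hIoosub : Set.Ioo (f t) (f t + ε) ⊆ (⋃ i, Set.Icc (x i) (y i))ᶜ := by
            intro u hu hmem
            obtain ⟨i, hi⟩ := Set.mem_iUnion.mp hmem
            by_cases hij : i = j
            · subst hij
              have h1 := hi.2
              have h2 := hu.1
              rw [hy] at h2
              linarith
            · refine hball ?_ (Set.mem_iUnion₂.mpr ⟨i, hij, hi⟩)
              rw [Metric.mem_ball, Real.dist_eq, abs_sub_lt_iff]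
              have h1 := hu.1
              have h2 := hu.2
              rw [hy] at h1 h2
              constructor <;> linarith
          have hlev' : 𝓝[{u | f u = f t} \ {t}] t ≠ ⊥ := hlev (f t) ⟨j, Or.inr hy⟩ t rfl
          have hcl := cluster_upper hf hmax (t := t) (b := f t + ε) (by linarith) hlev'
          exact closure_mono (Set.preimage_mono hIoosub) hcl
        · exact absurd (Set.mem_Ioo.mpr ⟨hx, hy⟩) hnotIoo
    · exact subset_closure hc
end

section
/- Let A ⊆ [0,∞) satisfy A ⊆ closure(interior A) and ([0,∞)∖A) ⊆ closure(interior([0,∞)∖A)). Let 0 ≤ S < T be real numbers and let I ⊆ [0,∞) be an interval with (S,T) ⊆ I ⊆ [S,T]. Fix t ∈ [0,∞) such that t+S ∉ ∂A and t+T ∉ ∂A (frontiers in [0,∞)). Then there exists N such that for all n ≥ N: (∃ s ∈ I ∩ ℕ/n with ⌊nt⌋/n + s ∈ A) holds if and only if (∃ s ∈ I with t+s ∈ A) holds. Equivalently, applying this to the complement of A, the corresponding statement with ∃ replaced by ∀ also holds for all sufficiently large n. -/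
/-!
If `t + s₀ ∈ A` for some `s₀ ∈ I`, then, because `A ⊆ cl (int A)` and the endpoints `t + S`,
`t + T` are not frontier points, some `u ∈ int A` lies strictly between `t + S` and `t + T`; the
shifted grid points `Λ_n(t) + Λ_n(u - t)` converge to `u`, so they eventually lie in that open set.
Otherwise `A` misses `[t + S, t + T]` and `t + S` is an interior point of `Aᶜ`; as `Λ_n(t) ↑ t`,
the window `Λ_n(t) + I` eventually lies in `[t + S, t + T]` together with a neighbourhood of
`t + S`, hence misses `A`. The `∀` statement is the `∃` statement for `Aᶜ`.
-/

open scoped NNReal Topology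

/-- `Λ_n(t) := ⌊nt⌋/n`. -/
noncomputable def Lam (n : ℕ) (t : ℝ≥0) : ℝ≥0 := (⌊(n : ℝ≥0) * t⌋₊ : ℝ≥0) / (n : ℝ≥0)

open Filter Set

section Order

variable {α : Type*} [LinearOrder α] [TopologicalSpace α] {A : Set α} {a b x : α}

theorem mem_Ioo_of_mem_frontier (hx : x ∈ Icc a b) (hxA : x ∈ frontier A)
    (ha : a ∉ frontier A) (hb : b ∉ frontier A) : x ∈ Ioo a b :=
  ⟨hx.1.lt_of_ne (by rintro rfl; exact ha hxA), hx.2.lt_of_ne' (by rintro rfl; exact hb hxA)⟩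

variable [OrderTopology α]

theorem Filter.Tendsto.eventually_Icc_subset {β : Type*} {l : Filter β} {f : β → α} {V : Set α}
    (hf : Tendsto f l (𝓝 a)) (hV : V ∈ 𝓝 a) : ∀ᶠ y in l, Icc (f y) a ⊆ V := by
  obtain ⟨b, c, ⟨-, hac⟩, hbc, hV⟩ := exists_Icc_mem_subset_of_mem_nhds hV
  filter_upwards [hf hbc] with y hy
  exact (Icc_subset_Icc hy.1 hac).trans hV

variable [DenselyOrdered α]

theorem interior_inter_Ioo_nonempty (hA : A ⊆ closure (interior A)) (hab : a < b)
    (hx : x ∈ Icc a b) (hxA : x ∈ A) (ha : a ∉ frontier A) (hb : b ∉ frontier A) :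
    (interior A ∩ Ioo a b).Nonempty := by
  by_cases hxi : x ∈ interior A
  · rw [← closure_Ioo hab.ne] at hx
    rw [inter_comm, ← closure_inter_open_nonempty_iff isOpen_interior]
    exact ⟨x, hx, hxi⟩
  · rw [← closure_inter_open_nonempty_iff isOpen_Ioo]
    exact ⟨x, hA hxA, mem_Ioo_of_mem_frontier hx ⟨subset_closure hxA, hxi⟩ ha hb⟩

theorem mem_interior_compl_of_Ioo_subset_compl (hab : a < b) (h : Ioo a b ⊆ Aᶜ)
    (hx : x ∈ Icc a b) (hxA : x ∉ frontier A) : x ∈ interior Aᶜ := by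
  have hxi : x ∈ (interior A)ᶜ := by
    rw [← closure_Ioo hab.ne] at hx
    simpa only [closure_compl] using closure_mono h hx
  rw [interior_compl]
  exact fun hxc ↦ hxA ⟨hxc, hxi⟩

theorem Icc_subset_compl_of_Ioo_subset_compl (hab : a < b) (h : Ioo a b ⊆ Aᶜ)
    (ha : a ∉ frontier A) (hb : b ∉ frontier A) : Icc a b ⊆ Aᶜ := by
  intro x hx
  by_cases hxA : x ∈ frontier A
  · exact h (mem_Ioo_of_mem_frontier hx hxA ha hb)
  · exact interior_subset (mem_interior_compl_of_Ioo_subset_compl hab h hx hxA)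

end Order

theorem Lam_mem_grid (n : ℕ) (t : ℝ≥0) : Lam n t ∈ grid n := ⟨_, rfl⟩

theorem Lam_le (n : ℕ) (t : ℝ≥0) : Lam n t ≤ t := by
  rcases n.eq_zero_or_pos with rfl | hn
  · simp [Lam]
  rw [Lam, div_le_iff₀ (by exact_mod_cast hn), mul_comm]
  exact Nat.floor_le (by positivity)

theorem le_Lam_add_one_div {n : ℕ} (hn : n ≠ 0) (t : ℝ≥0) : t ≤ Lam n t + 1 / n := by
  rw [Lam, ← add_div, le_div_iff₀ (by positivity), mul_comm]
  exact_mod_cast (Nat.lt_floor_add_one ((n : ℝ≥0) * t)).le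

theorem tendsto_Lam (t : ℝ≥0) : Tendsto (Lam · t) atTop (𝓝 t) := by
  have hlow : Tendsto (fun n : ℕ ↦ t - 1 / n) atTop (𝓝 t) := by
    simpa using tendsto_const_nhds.sub (tendsto_one_div_atTop_nhds_zero_nat (𝕜 := ℝ≥0))
  refine tendsto_of_tendsto_of_tendsto_of_le_of_le' hlow tendsto_const_nhds ?_
    (Eventually.of_forall (Lam_le · t))
  filter_upwards [eventually_ne_atTop 0] with n hn
  exact tsub_le_iff_right.2 (le_Lam_add_one_div hn t)

section Semantics

variable {A I : Set ℝ≥0} {S T t : ℝ≥0}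

theorem eventually_exists_grid_of_exists (hA : A ⊆ closure (interior A)) (hST : S < T)
    (hI₁ : Ioo S T ⊆ I) (hI₂ : I ⊆ Icc S T) (hS : t + S ∉ frontier A)
    (hT : t + T ∉ frontier A) (h : ∃ s ∈ I, t + s ∈ A) :
    ∀ᶠ n in atTop, ∃ s ∈ I ∩ grid n, Lam n t + s ∈ A := by
  obtain ⟨s₀, hs₀I, hs₀A⟩ := h
  obtain ⟨u, huA, huI⟩ := interior_inter_Ioo_nonempty hA (add_lt_add_right hST t)
    ⟨add_le_add_right (hI₂ hs₀I).1 t, add_le_add_right (hI₂ hs₀I).2 t⟩ hs₀A hS hT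
  have htu : t ≤ u := le_self_add.trans huI.1.le
  have hlim : Tendsto (fun n ↦ Lam n (u - t)) atTop (𝓝 (u - t)) := tendsto_Lam _
  have hsum : Tendsto (fun n ↦ Lam n t + Lam n (u - t)) atTop (𝓝 u) := by
    simpa only [add_tsub_cancel_of_le htu] using (tendsto_Lam t).add hlim
  filter_upwards [hsum ((isOpen_interior.inter isOpen_Ioo).mem_nhds ⟨huA, huI⟩),
    hlim (Iio_mem_nhds ((tsub_lt_iff_left htu).2 huI.2))] with n hn hnT
  have hSn : S < Lam n (u - t) :=
    lt_of_add_lt_add_left (hn.2.1.trans_le (add_le_add_left (Lam_le n t) _))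
  exact ⟨Lam n (u - t), ⟨hI₁ ⟨hSn, hnT⟩, Lam_mem_grid _ _⟩, interior_subset hn.1⟩

theorem eventually_forall_Lam_add_notMem (hST : S < T) (hI₁ : Ioo S T ⊆ I) (hI₂ : I ⊆ Icc S T)
    (hS : t + S ∉ frontier A) (hT : t + T ∉ frontier A) (h : ∀ s ∈ I, t + s ∉ A) :
    ∀ᶠ n in atTop, ∀ s ∈ I, Lam n t + s ∉ A := by
  have hST' : t + S < t + T := add_lt_add_right hST t
  have hIoo : Ioo (t + S) (t + T) ⊆ Aᶜ := by
    intro x hx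
    have htx : t ≤ x := le_self_add.trans hx.1.le
    rw [← add_tsub_cancel_of_le htx]
    exact h _ (hI₁ ⟨lt_tsub_iff_left.2 hx.1, (tsub_lt_iff_left htx).2 hx.2⟩)
  have hIcc := Icc_subset_compl_of_Ioo_subset_compl hST' hIoo hS hT
  have hSint := mem_interior_compl_of_Ioo_subset_compl hST' hIoo ⟨le_rfl, hST'.le⟩ hS
  filter_upwards [((tendsto_Lam t).add_const S).eventually_Icc_subset
    (isOpen_interior.mem_nhds hSint)] with n hn s hs
  obtain ⟨hSs, hsT⟩ := hI₂ hs
  rcases lt_or_ge (Lam n t + s) (t + S) with hlt | hge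
  · exact interior_subset (hn ⟨add_le_add_right hSs _, hlt.le⟩)
  · exact hIcc ⟨hge, add_le_add (Lam_le n t) hsT⟩

theorem eventually_exists_grid_iff (hA : A ⊆ closure (interior A)) (hST : S < T)
    (hI₁ : Ioo S T ⊆ I) (hI₂ : I ⊆ Icc S T) (hS : t + S ∉ frontier A)
    (hT : t + T ∉ frontier A) :
    ∀ᶠ n in atTop, (∃ s ∈ I ∩ grid n, Lam n t + s ∈ A) ↔ ∃ s ∈ I, t + s ∈ A := by
  by_cases h : ∃ s ∈ I, t + s ∈ A
  · filter_upwards [eventually_exists_grid_of_exists hA hST hI₁ hI₂ hS hT h] with n hn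
      using iff_of_true hn h
  · push Not at h
    filter_upwards [eventually_forall_Lam_add_notMem hST hI₁ hI₂ hS hT h] with n hn
    exact iff_of_false (fun ⟨s, hs, hsA⟩ ↦ hn s hs.1 hsA) (fun ⟨s, hs, hsA⟩ ↦ h s hs hsA)

end Semantics

/-- let `A ⊆ [0,∞)` satisfy `A ⊆ cl(int A)` and `Aᶜ ⊆ cl(int Aᶜ)`, let
`0 ≤ S < T` and `(S,T) ⊆ I ⊆ [S,T]`, and fix `t` with `t+S ∉ ∂A` and `t+T ∉ ∂A`. Then for
all sufficiently large `n`, the discrete-time semantics of `◇_I` at `Λ_n(t)` agrees with the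
continuous-time semantics at `t`, and likewise with `∃` replaced by `∀`. -/
theorem stmt_14 (A : Set ℝ≥0)
    (hA : A ⊆ closure (interior A)) (hAc : Aᶜ ⊆ closure (interior Aᶜ))
    (S T : ℝ≥0) (hST : S < T) (I : Set ℝ≥0)
    (hI₁ : Set.Ioo S T ⊆ I) (hI₂ : I ⊆ Set.Icc S T)
    (t : ℝ≥0) (hS : t + S ∉ frontier A) (hT : t + T ∉ frontier A) :
    (∃ N : ℕ, ∀ n ≥ N, ((∃ s ∈ I ∩ grid n, Lam n t + s ∈ A) ↔ ∃ s ∈ I, t + s ∈ A)) ∧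
      (∃ N : ℕ, ∀ n ≥ N, ((∀ s ∈ I ∩ grid n, Lam n t + s ∈ A) ↔ ∀ s ∈ I, t + s ∈ A)) := by
  have hall : ∀ᶠ n in atTop,
      (∀ s ∈ I ∩ grid n, Lam n t + s ∈ A) ↔ ∀ s ∈ I, t + s ∈ A := by
    rw [← frontier_compl] at hS hT
    filter_upwards [eventually_exists_grid_iff hAc hST hI₁ hI₂ hS hT] with n hn
    simpa only [mem_compl_iff, not_exists, not_and, not_not] using hn.not
  exact ⟨eventually_atTop.1 (eventually_exists_grid_iff hA hST hI₁ hI₂ hS hT),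
    eventually_atTop.1 hall⟩
end

section
/- Let (Ω,F,P) be a complete probability space and X : [0,∞) → Ω → ℝ a process such that each X_t is F-measurable, almost every path t ↦ X_t(ω) is continuous, and for every t ∈ (0,∞) the law of X_t is absolutely continuous with respect to Lebesgue measure. Assign to each atomic proposition a ∈ AP a Borel set B_a ⊆ ℝ whose topological boundary ∂B_a has Lebesgue measure zero. Then for every formula φ built from atomic propositions by ¬, ∧, and ◇_{[S,T]} (0 ≤ S < T real), there exists K ∈ F ⊗ B([0,∞)) such that: (i) for P-a.e. ω the section K_ω := {t : (ω,t) ∈ K} is a closed subset of [0,∞); (ii) for P-a.e. ω, K_ω has Lebesgue measure zero; (iii) for every t ∈ (0,∞), P({ω : (ω,t) ∈ K}) = 0; (iv) for P-a.e. ω, the frontier in [0,∞) of the time set ⟦φ⟧_ω := {t ≥ 0 : X(ω),t ⊨ φ} is contained in K_ω. -/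
/-!
After replacing `X` by a version all of whose paths are continuous, `K` is built by induction
on `φ`. For an atom it is the set of times at which the path lies in `∂B_a`; its time slices
are null because the laws of the `X_t` do not charge the Lebesgue-null set `∂B_a`. Negation
does not change the frontier, and the frontier of a conjunction lies in the union of the two
frontiers. The frontier of the time set of `◇_{[S,T]}φ` lies in the frontier of that of `φ`
shifted by `S` or by `T`, since a boundary time `t` forces a point of the closure of `⟦φ⟧`
into `[t+S, t+T]`, and if that point is not an endpoint, or is interior to `⟦φ⟧`, then `t`
is interior to `⟦◇_{[S,T]}φ⟧`. Finally, Fubini turns null time slices into null sections.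
-/

open MeasureTheory
open scoped NNReal ENNReal Topology

/-- Formulas built from atomic propositions by `¬`, `∧` and `◇_{[S,T]}`. -/
inductive DForm (AP : Type*) : Type _ where
  | atom : AP → DForm AP
  | not : DForm AP → DForm AP
  | and : DForm AP → DForm AP → DForm AP
  | dia : ℝ≥0 → ℝ≥0 → DForm AP → DForm AP

/-- Well-formedness: each diamond `◇_{[S,T]}` has `0 ≤ S < T`. -/
def DForm.ok {AP : Type*} : DForm AP → Prop
  | DForm.atom _ => True
  | DForm.not φ => φ.ok
  | DForm.and φ ψ => φ.ok ∧ ψ.ok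
  | DForm.dia S T φ => S < T ∧ φ.ok

/-- Continuous-time satisfaction along the path `t ↦ X_t(ω)`, with `a` interpreted by `V a`;
`◇_{[S,T]}φ` holds at `t` iff `φ` holds at `t+s` for some `s ∈ [S,T]`. -/
def DForm.Sat {Ω AP : Type*} (X : ℝ≥0 → Ω → ℝ) (V : AP → Set ℝ) :
    DForm AP → Ω → ℝ≥0 → Prop
  | DForm.atom a => fun ω t => X t ω ∈ V a
  | DForm.not φ => fun ω t => ¬ φ.Sat X V ω t
  | DForm.and φ ψ => fun ω t => φ.Sat X V ω t ∧ ψ.Sat X V ω t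
  | DForm.dia S T φ => fun ω t => ∃ s ∈ Set.Icc S T, φ.Sat X V ω (t + s)

open Set

lemma DForm.sat_congr {Ω AP : Type*} {X Y : ℝ≥0 → Ω → ℝ} (V : AP → Set ℝ) {ω : Ω}
    (h : ∀ t, X t ω = Y t ω) (φ : DForm AP) : φ.Sat X V ω = φ.Sat Y V ω := by
  funext t
  induction φ generalizing t with
  | atom a => simp only [DForm.Sat, h t]
  | not ψ ih => simp only [DForm.Sat, ih]
  | and ψ χ ihψ ihχ => simp only [DForm.Sat, ihψ, ihχ]
  | dia S T ψ ih => simp only [DForm.Sat, ih]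

section Diamond

def diamondSet (S T : ℝ≥0) (A : Set ℝ≥0) : Set ℝ≥0 := {t | ∃ s ∈ Icc S T, t + s ∈ A}

variable {S T t : ℝ≥0} {A : Set ℝ≥0}

lemma diamondSet_mono {B : Set ℝ≥0} (h : A ⊆ B) : diamondSet S T A ⊆ diamondSet S T B := by
  rintro t ⟨s, hs, hA⟩
  exact ⟨s, hs, h hA⟩

lemma mem_interior_diamondSet_of_mem_Ioo {a : ℝ≥0} (ha : a ∈ A) (hat : a ∈ Ioo (t + S) (t + T)) :
    t ∈ interior (diamondSet S T A) := by
  have hsub : {t' | t' + S < a ∧ a < t' + T} ⊆ diamondSet S T A := by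
    rintro t' ⟨hS, hT⟩
    refine ⟨a - t', ⟨le_tsub_of_add_le_left hS.le, tsub_le_iff_left.2 hT.le⟩, ?_⟩
    rwa [add_tsub_cancel_of_le (le_self_add.trans hS.le)]
  have hopen : IsOpen {t' | t' + S < a ∧ a < t' + T} :=
    (isOpen_lt (by fun_prop) continuous_const).inter (isOpen_lt continuous_const (by fun_prop))
  exact interior_maximal hsub hopen hat

lemma mem_interior_diamondSet_of_add_mem_interior {s : ℝ≥0} (hs : s ∈ Icc S T)
    (hts : t + s ∈ interior A) : t ∈ interior (diamondSet S T A) :=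
  interior_maximal (s := diamondSet S T A) (t := (· + s) ⁻¹' interior A)
    (fun _ ht' => ⟨s, hs, interior_subset ht'⟩) (isOpen_interior.preimage (continuous_add_const s))
    hts

lemma exists_add_mem_closure_of_mem_closure_diamondSet (ht : t ∈ closure (diamondSet S T A)) :
    ∃ s ∈ Icc S T, t + s ∈ closure A := by
  have hclosed : IsClosed (diamondSet S T (closure A)) := by
    have himage : diamondSet S T (closure A) =
        Prod.fst '' {p : ℝ≥0 × Icc S T | p.1 + p.2 ∈ closure A} := by
      ext t'
      simp [diamondSet]
    rw [himage]
    exact isClosedMap_fst_of_compactSpace _ (isClosed_closure.preimage (by fun_prop))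
  exact closure_minimal (diamondSet_mono subset_closure) hclosed ht

lemma frontier_diamondSet_subset (S T : ℝ≥0) (A : Set ℝ≥0) :
    frontier (diamondSet S T A) ⊆ (· + S) ⁻¹' frontier A ∪ (· + T) ⁻¹' frontier A := by
  rintro t ⟨htc, hti⟩
  obtain ⟨s, hs, hsA⟩ := exists_add_mem_closure_of_mem_closure_diamondSet htc
  have hend : s = S ∨ s = T := by
    by_contra! hne
    have hwindow : t + s ∈ Ioo (t + S) (t + T) :=
      ⟨add_lt_add_right (hs.1.lt_of_ne hne.1.symm) t, add_lt_add_right (hs.2.lt_of_ne hne.2) t⟩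
    obtain ⟨a, ha, haA⟩ := mem_closure_iff.1 hsA _ isOpen_Ioo hwindow
    exact hti (mem_interior_diamondSet_of_mem_Ioo haA ha)
  have hsi : t + s ∉ interior A := fun h => hti (mem_interior_diamondSet_of_add_mem_interior hs h)
  rcases hend with rfl | rfl
  · exact Or.inl ⟨hsA, hsi⟩
  · exact Or.inr ⟨hsA, hsi⟩

end Diamond

section RandomSet

variable {Ω : Type*} [MeasurableSpace Ω] {P : Measure Ω}

structure IsNegligibleClosedRandomSet (P : Measure Ω) (K : Set (Ω × ℝ≥0)) : Prop where
  measurableSet : MeasurableSet K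
  isClosed_section : ∀ ω, IsClosed {t | (ω, t) ∈ K}
  measure_slice : ∀ t, 0 < t → P {ω | (ω, t) ∈ K} = 0

namespace IsNegligibleClosedRandomSet

variable {K L : Set (Ω × ℝ≥0)}

lemma union (hK : IsNegligibleClosedRandomSet P K) (hL : IsNegligibleClosedRandomSet P L) :
    IsNegligibleClosedRandomSet P (K ∪ L) where
  measurableSet := hK.measurableSet.union hL.measurableSet
  isClosed_section ω := (hK.isClosed_section ω).union (hL.isClosed_section ω)
  measure_slice t ht := measure_union_null (hK.measure_slice t ht) (hL.measure_slice t ht)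

lemma shift (hK : IsNegligibleClosedRandomSet P K) (S : ℝ≥0) :
    IsNegligibleClosedRandomSet P {p | (p.1, p.2 + S) ∈ K} where
  measurableSet := hK.measurableSet.preimage (measurable_fst.prodMk (measurable_snd.add_const S))
  isClosed_section ω := (hK.isClosed_section ω).preimage (continuous_add_const S)
  measure_slice t ht := hK.measure_slice (t + S) (ht.trans_le le_self_add)

lemma ae_volume_section_eq_zero [SFinite P] (hK : IsNegligibleClosedRandomSet P K) :
    ∀ᵐ ω ∂P, volume (((↑) : ℝ≥0 → ℝ) '' {t | (ω, t) ∈ K}) = 0 := by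
  have hmeas : MeasurableSet {p : Ω × ℝ | 0 < p.2 → (p.1, p.2.toNNReal) ∉ K} :=
    (measurableSet_lt measurable_const measurable_snd).himp
      (hK.measurableSet.preimage
        (measurable_fst.prodMk (measurable_real_toNNReal.comp measurable_snd))).compl
  have hslices : ∀ x : ℝ, ∀ᵐ ω ∂P, 0 < x → (ω, x.toNNReal) ∉ K := by
    intro x
    by_cases hx : 0 < x
    · have hnull := hK.measure_slice _ (Real.toNNReal_pos.2 hx)
      filter_upwards [measure_eq_zero_iff_ae_notMem.1 hnull] with ω hω using fun _ => hω
    · exact .of_forall fun _ h => absurd h hx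
  filter_upwards [(Measure.ae_ae_comm (ν := volume) hmeas).2 (.of_forall hslices)] with ω hω
  refine measure_mono_null (t := {0} ∪ {x | 0 < x ∧ (ω, x.toNNReal) ∈ K}) ?_
    (measure_union_null Real.volume_singleton (by simpa [ae_iff] using hω))
  rintro _ ⟨t, ht, rfl⟩
  rcases t.coe_nonneg.eq_or_lt with h | h
  · exact Or.inl h.symm
  · exact Or.inr ⟨h, by simpa using ht⟩

end IsNegligibleClosedRandomSet

end RandomSet

lemma exists_version_forall_continuous {Ω ι E : Type*} [MeasurableSpace Ω] [TopologicalSpace ι]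
    [TopologicalSpace E] [MeasurableSpace E] [Nonempty E] {P : Measure Ω} {X : ι → Ω → E}
    (hX : ∀ t, Measurable (X t)) (hcont : ∀ᵐ ω ∂P, Continuous fun t => X t ω) :
    ∃ Y : ι → Ω → E, (∀ t, Measurable (Y t)) ∧ (∀ ω, Continuous fun t => Y t ω) ∧
      ∀ᵐ ω ∂P, ∀ t, X t ω = Y t ω := by
  classical
  set N := toMeasurable P {ω | ¬ Continuous fun t => X t ω}
  have hN : MeasurableSet N := measurableSet_toMeasurable _ _
  have hcontN : ∀ ω ∉ N, Continuous fun t => X t ω :=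
    fun ω hω => not_not.1 fun h => hω (subset_toMeasurable _ _ h)
  refine ⟨fun t => N.piecewise (fun _ => Classical.arbitrary E) (X t),
    fun t => Measurable.piecewise hN measurable_const (hX t), fun ω => ?_, ?_⟩
  · by_cases hω : ω ∈ N
    · simpa [hω] using continuous_const
    · simpa [hω] using hcontN ω hω
  · have hNnull : P N = 0 := by rw [measure_toMeasurable]; exact ae_iff.1 hcont
    filter_upwards [measure_eq_zero_iff_ae_notMem.1 hNnull] with ω hω t
    simp [hω]

section ContinuousPaths

variable {Ω AP : Type*} [MeasurableSpace Ω] {P : Measure Ω} {Y : ℝ≥0 → Ω → ℝ}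

lemma isNegligibleClosedRandomSet_preimage (hYc : ∀ ω, Continuous fun t => Y t ω)
    (hYm : Measurable fun p : Ω × ℝ≥0 => Y p.2 p.1)
    (habs : ∀ t : ℝ≥0, 0 < t → P.map (fun ω => Y t ω) ≪ (volume : Measure ℝ))
    {F : Set ℝ} (hF : IsClosed F) (hF0 : volume F = 0) :
    IsNegligibleClosedRandomSet P ((fun p : Ω × ℝ≥0 => Y p.2 p.1) ⁻¹' F) where
  measurableSet := hYm hF.measurableSet
  isClosed_section ω := hF.preimage (hYc ω)
  measure_slice t ht := by
    have hYt : Measurable fun ω => Y t ω := hYm.comp measurable_prodMk_right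
    have h := habs t ht hF0
    rwa [Measure.map_apply hYt hF.measurableSet] at h

theorem DForm.exists_frontier_subset (hYc : ∀ ω, Continuous fun t => Y t ω)
    (hYm : Measurable fun p : Ω × ℝ≥0 => Y p.2 p.1)
    (habs : ∀ t : ℝ≥0, 0 < t → P.map (fun ω => Y t ω) ≪ (volume : Measure ℝ))
    (V : AP → Set ℝ) (hVb : ∀ a, (volume : Measure ℝ) (frontier (V a)) = 0) (φ : DForm AP) :
    ∃ K, IsNegligibleClosedRandomSet P K ∧
      ∀ ω, frontier {t | φ.Sat Y V ω t} ⊆ {t | (ω, t) ∈ K} := by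
  induction φ with
  | atom a =>
    exact ⟨_, isNegligibleClosedRandomSet_preimage hYc hYm habs isClosed_frontier (hVb a),
      fun ω => (hYc ω).frontier_preimage_subset (V a)⟩
  | not ψ ih =>
    obtain ⟨K, hK, hfr⟩ := ih
    refine ⟨K, hK, fun ω => ?_⟩
    simpa only [DForm.Sat, ← compl_ofPred, frontier_compl] using hfr ω
  | and ψ χ ihψ ihχ =>
    obtain ⟨K, hK, hfrK⟩ := ihψ
    obtain ⟨L, hL, hfrL⟩ := ihχ
    refine ⟨K ∪ L, hK.union hL, fun ω => ?_⟩
    change frontier ({t | ψ.Sat Y V ω t} ∩ {t | χ.Sat Y V ω t}) ⊆ _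
    exact (frontier_inter_subset _ _).trans
      (union_subset_union (inter_subset_left.trans (hfrK ω)) (inter_subset_right.trans (hfrL ω)))
  | dia S T ψ ih =>
    obtain ⟨K, hK, hfr⟩ := ih
    refine ⟨_, (hK.shift S).union (hK.shift T), fun ω => ?_⟩
    exact (frontier_diamondSet_subset S T _).trans (union_subset_union
      (preimage_mono (hfr ω)) (preimage_mono (hfr ω)))

end ContinuousPaths

theorem stmt_15_general {Ω AP : Type*} [MeasurableSpace Ω] (P : Measure Ω) [IsProbabilityMeasure P]
    (X : ℝ≥0 → Ω → ℝ)
    (hXt : ∀ t : ℝ≥0, Measurable fun ω => X t ω)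
    (hcont : ∀ᵐ ω ∂P, Continuous fun t => X t ω)
    (habs : ∀ t : ℝ≥0, 0 < t → P.map (fun ω => X t ω) ≪ (volume : Measure ℝ))
    (V : AP → Set ℝ)
    (hVb : ∀ a, (volume : Measure ℝ) (frontier (V a)) = 0)
    (φ : DForm AP) :
    ∃ K : Set (Ω × ℝ≥0), MeasurableSet K ∧
      (∀ᵐ ω ∂P, IsClosed {t : ℝ≥0 | (ω, t) ∈ K}) ∧
      (∀ᵐ ω ∂P, (volume : Measure ℝ) ((fun u : ℝ≥0 => (u : ℝ)) '' {t : ℝ≥0 | (ω, t) ∈ K}) = 0) ∧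
      (∀ t : ℝ≥0, 0 < t → P {ω | (ω, t) ∈ K} = 0) ∧
      (∀ᵐ ω ∂P, frontier {t : ℝ≥0 | φ.Sat X V ω t} ⊆ {t : ℝ≥0 | (ω, t) ∈ K}) := by
  obtain ⟨Y, hYt, hYc, hXY⟩ := exists_version_forall_continuous hXt hcont
  have hYm : Measurable fun p : Ω × ℝ≥0 => Y p.2 p.1 :=
    (stronglyMeasurable_uncurry_of_continuous_of_stronglyMeasurable hYc
      fun t => (hYt t).stronglyMeasurable).measurable.comp measurable_swap
  have hYabs : ∀ t : ℝ≥0, 0 < t → P.map (fun ω => Y t ω) ≪ (volume : Measure ℝ) := fun t ht => by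
    rw [← Measure.map_congr (hXY.mono fun ω h => h t)]
    exact habs t ht
  obtain ⟨K, hK, hfr⟩ := φ.exists_frontier_subset hYc hYm hYabs V hVb
  refine ⟨K, hK.measurableSet, .of_forall hK.isClosed_section, hK.ae_volume_section_eq_zero,
    hK.measure_slice, ?_⟩
  filter_upwards [hXY] with ω hω
  rw [DForm.sat_congr V hω φ]
  exact hfr ω

/-- on a complete probability space, for a process with measurable marginals,
a.e. continuous paths and absolutely continuous laws at positive times, and atomic
propositions interpreted by Borel sets with Lebesgue-null boundaries, every formula `φ`
(built with `¬`, `∧`, `◇_{[S,T]}`) admits a product-measurable set `K` such that a.e. section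
`K_ω` is closed and Lebesgue-null, each time-section of `K` is `P`-null for `t > 0`, and a.e.
the frontier of the time set `⟦φ⟧_ω` is contained in `K_ω`. -/
theorem stmt_15 {Ω AP : Type*} [MeasurableSpace Ω] (P : Measure Ω) [IsProbabilityMeasure P]
    [P.IsComplete] (X : ℝ≥0 → Ω → ℝ)
    (hXt : ∀ t : ℝ≥0, Measurable fun ω => X t ω)
    (hcont : ∀ᵐ ω ∂P, Continuous fun t => X t ω)
    (habs : ∀ t : ℝ≥0, 0 < t → P.map (fun ω => X t ω) ≪ (volume : Measure ℝ))
    (V : AP → Set ℝ) (hV : ∀ a, MeasurableSet (V a))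
    (hVb : ∀ a, (volume : Measure ℝ) (frontier (V a)) = 0)
    (φ : DForm AP) (hφ : φ.ok) :
    ∃ K : Set (Ω × ℝ≥0), MeasurableSet K ∧
      (∀ᵐ ω ∂P, IsClosed {t : ℝ≥0 | (ω, t) ∈ K}) ∧
      (∀ᵐ ω ∂P, (volume : Measure ℝ) ((fun u : ℝ≥0 => (u : ℝ)) '' {t : ℝ≥0 | (ω, t) ∈ K}) = 0) ∧
      (∀ t : ℝ≥0, 0 < t → P {ω | (ω, t) ∈ K} = 0) ∧
      (∀ᵐ ω ∂P, frontier {t : ℝ≥0 | φ.Sat X V ω t} ⊆ {t : ℝ≥0 | (ω, t) ∈ K}) :=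
  stmt_15_general P X hXt hcont habs V hVb φ
end
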